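/- arXiv:1303.1085 — 10 statements merged into one kernel-verified Lean document; each statement's English description precedes it below -/
import Mathlib

section
/- Let x = (x_1,…,x_R) be a vector of distinct real numbers and c = (c_1,…,c_R) a vector of real numbers. If R is odd, then det(B(x,c)) = 0. If R = 2T is even, then det(B(x,c)) = Σ_P ∏_{{m,n} ∈ P} b_{m,n}(x,c)², where the sum ranges over all partitions P of {1,…,R} into T unordered pairs. -/
/-!
Expanding the determinant over permutations, only derangements survive because the diagonal
vanishes. Fix an index `a` and write every permutation moving `a` uniquely as `τ * swap a u`
with `τ a = a`. If `(a u)` is a 2-cycle, its sign and `b_{ua} b_{au} = -b_{au}²` contribute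
`b_{au}²` times the same expansion on the remaining indices. Otherwise `a` is spliced into a
cycle of `τ` before `u`; by `b_{va} b_{au} = c_a² b_{vu} (1/(x_a - x_u) + 1/(x_v - x_a))` these
terms sum over `u` to `c_a²` times `τ`'s term times `∑ u, (1/(x_a - x_u) + 1/(x_{τ u} - x_a))`,
which vanishes after reindexing by `τ`. The resulting recursion for the derangement sums,
`D(S) = ∑ u, b_{au}² D(S ∖ {a, u})`, is also satisfied by the sum over pair partitions.
The odd case is skew-symmetry.
-/

/-- The generalized weighted Hilbert matrix `B(x,c)` with entries
`b_{m,n} = c_m c_n / (x_m - x_n)` for `m ≠ n` and `0` on the diagonal. -/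
noncomputable def Bmat {R : ℕ} (x c : Fin R → ℝ) : Matrix (Fin R) (Fin R) ℝ :=
  Matrix.of fun m n => if m = n then 0 else c m * c n / (x m - x n)

open Finset Equiv Matrix

namespace Equiv.Perm

variable {ι : Type*} [DecidableEq ι]

theorem prod_mul_swap_apply {M : Type*} [CommMonoid M] (f : ι → ι → M) {τ : Perm ι}
    {S : Finset ι} {a u : ι} (hτa : τ a = a) (ha : a ∈ S) (hu : u ∈ S.erase a) :
    ∏ i ∈ S, f ((τ * swap a u) i) i = f (τ u) a * f a u * ∏ i ∈ (S.erase a).erase u, f (τ i) i := by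
  rw [← mul_prod_erase S _ ha, ← mul_prod_erase _ _ hu, ← mul_assoc]
  congr 1
  · simp [hτa]
  · refine prod_congr rfl fun i hi => ?_
    simp only [mem_erase] at hi
    rw [mul_apply, swap_apply_of_ne_of_ne hi.2.1 hi.1]

variable [Fintype ι]

theorem support_mul_swap_of_apply_eq {τ : Perm ι} {a u : ι} (ha : τ a = a) (hau : a ≠ u) :
    (τ * swap a u).support = insert a (insert u τ.support) := by
  ext i
  rcases eq_or_ne i a with rfl | hia
  · simpa [hau] using fun h : τ u = i => hau (τ.injective (h.trans ha.symm)).symm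
  rcases eq_or_ne i u with rfl | hiu
  · simp [ha, hau]
  · simp [swap_apply_of_ne_of_ne hia hiu, hia, hiu]

theorem sum_support_eq_sum_sum_mul_swap {M : Type*} [AddCommMonoid M] (F : Perm ι → M)
    {S : Finset ι} {a : ι} (ha : a ∈ S) :
    ∑ σ ∈ univ.filter (·.support = S), F σ =
      ∑ u ∈ S.erase a, ∑ τ ∈ univ.filter (fun τ : Perm ι => τ a = a ∧ (τ * swap a u).support = S),
        F (τ * swap a u) := by
  rw [sum_sigma']
  refine sum_nbij' (fun σ => ⟨σ.symm a, σ * swap a (σ.symm a)⟩) (fun q => q.2 * swap a q.1)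
    ?_ ?_ ?_ ?_ ?_
  · intro σ hσ
    simp only [mem_filter, mem_univ, true_and] at hσ
    have hσa : σ.symm a ≠ a := fun h => mem_support.mp (hσ ▸ ha) (σ.symm_apply_eq.mp h).symm
    simp [hσa, hσa.symm, mul_assoc, ← hσ]
  · rintro ⟨u, τ⟩ hq
    simp_all
  · intro σ _
    simp [mul_assoc]
  · rintro ⟨u, τ⟩ hq
    simp only [mem_sigma, mem_filter, mem_univ, true_and] at hq
    have hu : (τ * swap a u).symm a = u := (τ * swap a u).symm_apply_eq.mpr (by simp [hq.2.1])
    simp [mul_assoc, hu]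
  · intro σ _
    simp [mul_assoc]

theorem sum_filter_support_mul_swap {M : Type*} [AddCommMonoid M] (G : Perm ι → M)
    {S : Finset ι} {a u : ι} (ha : a ∈ S) (hu : u ∈ S.erase a) :
    ∑ τ ∈ univ.filter (fun τ : Perm ι => τ a = a ∧ (τ * swap a u).support = S), G τ =
      ∑ τ ∈ univ.filter (·.support = (S.erase a).erase u), G τ +
        ∑ τ ∈ univ.filter (·.support = S.erase a), G τ := by
  have hau : a ≠ u := (ne_of_mem_erase hu).symm
  rw [← sum_union (disjoint_filter.mpr fun τ _ h h' => by
    simpa [hu] using congrArg (u ∈ ·) (h.symm.trans h'))]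
  congr 1
  ext τ
  simp only [mem_filter, mem_univ, true_and, mem_union]
  constructor
  · rintro ⟨hτa, hτ⟩
    rw [support_mul_swap_of_apply_eq hτa hau] at hτ
    have haτ : a ∉ τ.support := notMem_support.mpr hτa
    subst hτ
    by_cases huτ : u ∈ τ.support
    · right; ext t; grind
    · left; ext t; grind
  · intro hτ
    have hτa : τ a = a := notMem_support.mp (by rcases hτ with h | h <;> simp [h])
    refine ⟨hτa, ?_⟩
    rw [support_mul_swap_of_apply_eq hτa hau]
    rcases hτ with h | h <;> simp [h, insert_erase, hu, ha]

end Equiv.Perm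

namespace Matrix

variable {ι R : Type*} [DecidableEq ι] [Fintype ι] [CommRing R]

theorem det_eq_zero_of_transpose_eq_neg [IsAddTorsionFree R] {A : Matrix ι ι R} (hA : Aᵀ = -A)
    (hodd : Odd (Fintype.card ι)) : A.det = 0 := by
  refine self_eq_neg.mp ?_
  calc A.det = Aᵀ.det := A.det_transpose.symm
    _ = -A.det := by rw [hA, det_neg, hodd.neg_one_pow, neg_one_mul]

/-- For `A` with zero diagonal this is the principal minor of `A` on `S`. -/
def derangementSum (A : Matrix ι ι R) (S : Finset ι) : R :=
  ∑ σ ∈ univ.filter (·.support = S), ((Perm.sign σ : ℤ) : R) * ∏ i ∈ S, A (σ i) i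

variable (A : Matrix ι ι R)

theorem det_eq_derangementSum_univ (hA : ∀ i, A i i = 0) : A.det = A.derangementSum univ := by
  rw [det_apply, derangementSum, ← sum_filter_add_sum_filter_not _ (·.support = univ)]
  have hfix : ∀ σ ∈ univ.filter (fun σ : Perm ι => σ.support ≠ univ),
      Perm.sign σ • ∏ i, A (σ i) i = 0 := by
    intro σ hσ
    obtain ⟨i, hi⟩ : ∃ i, σ i = i := by
      simpa [eq_univ_iff_forall, Perm.mem_support] using (mem_filter.mp hσ).2
    rw [prod_eq_zero (mem_univ i) (by rw [hi, hA]), smul_zero]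
  rw [sum_eq_zero hfix, add_zero]
  exact sum_congr rfl fun σ _ => by simp [Units.smul_def]

theorem derangementSum_empty : A.derangementSum ∅ = 1 := by
  simp [derangementSum, Perm.support_eq_empty_iff, filter_eq']

theorem derangementSum_eq_sub_of_mem {S : Finset ι} {a : ι} (ha : a ∈ S) :
    A.derangementSum S =
      ∑ u ∈ S.erase a, -(A u a * A a u) * A.derangementSum ((S.erase a).erase u) -
        ∑ τ ∈ univ.filter (·.support = S.erase a), ((Perm.sign τ : ℤ) : R) *
          ∑ u ∈ S.erase a, A (τ u) a * A a u * ∏ i ∈ (S.erase a).erase u, A (τ i) i := by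
  have hterm : ∀ u ∈ S.erase a, ∀ τ : Perm ι, τ a = a →
      ((Perm.sign (τ * Equiv.swap a u) : ℤ) : R) * ∏ i ∈ S, A ((τ * Equiv.swap a u) i) i =
        -(((Perm.sign τ : ℤ) : R) *
          (A (τ u) a * A a u * ∏ i ∈ (S.erase a).erase u, A (τ i) i)) := by
    intro u hu τ hτa
    rw [Perm.prod_mul_swap_apply A hτa ha hu, Perm.sign_mul,
      Perm.sign_swap (ne_of_mem_erase hu).symm]
    push_cast
    ring
  rw [derangementSum, Perm.sum_support_eq_sum_sum_mul_swap _ ha,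
    sum_congr rfl fun u hu => (sum_congr rfl fun τ hτ => hterm u hu τ (mem_filter.mp hτ).2.1).trans
      (Perm.sum_filter_support_mul_swap _ ha hu),
    sum_add_distrib, sum_comm (s := S.erase a), sub_eq_add_neg, ← sum_neg_distrib]
  congr 1
  · refine sum_congr rfl fun u _ => ?_
    rw [derangementSum, mul_sum]
    refine sum_congr rfl fun τ hτ => ?_
    have hτu : τ u = u := Perm.notMem_support.mp (by simp [(mem_filter.mp hτ).2])
    rw [hτu]
    ring
  · simp only [mul_sum, sum_neg_distrib]

end Matrix

section PairPartitions

variable {ι : Type*} [DecidableEq ι] [Fintype ι]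

def pairPartitions (S : Finset ι) : Finset (Finset (Finset ι)) :=
  univ.filter fun P => (∀ p ∈ P, p.card = 2) ∧ (∀ p ∈ P, ∀ q ∈ P, p ≠ q → Disjoint p q) ∧
    P.biUnion id = S

theorem pairPartitions_empty : pairPartitions (∅ : Finset ι) = {∅} := by
  ext P
  simp only [pairPartitions, mem_filter, mem_univ, true_and, mem_singleton]
  constructor
  · rintro ⟨hcard, -, hempty⟩
    refine eq_empty_of_forall_notMem fun p hp => ?_
    obtain ⟨t, ht⟩ := card_pos.mp (hcard p hp ▸ two_pos)
    simpa [hempty] using mem_biUnion.mpr ⟨p, hp, show t ∈ id p from ht⟩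
  · rintro rfl
    simp

variable {S : Finset ι} {P : Finset (Finset ι)} {a j : ι}

theorem exists_pair_mem_of_mem_pairPartitions (hP : P ∈ pairPartitions S) (ha : a ∈ S) :
    ∃ j ∈ S.erase a, {a, j} ∈ P := by
  simp only [pairPartitions, mem_filter, mem_univ, true_and] at hP
  obtain ⟨hcard, -, rfl⟩ := hP
  obtain ⟨p, hp, hap⟩ := mem_biUnion.mp ha
  obtain ⟨u, v, huv, rfl⟩ := card_eq_two.mp (hcard p hp)
  rcases mem_insert.mp hap with rfl | h
  · exact ⟨v, mem_erase.mpr ⟨huv.symm, mem_biUnion.mpr ⟨_, hp, by simp⟩⟩, hp⟩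
  · obtain rfl := mem_singleton.mp h
    rw [pair_comm] at hp
    exact ⟨u, mem_erase.mpr ⟨huv, mem_biUnion.mpr ⟨_, hp, by simp⟩⟩, hp⟩

theorem eq_of_pair_mem_pairPartitions (hP : P ∈ pairPartitions S) {k : ι}
    (hj : {a, j} ∈ P) (hk : {a, k} ∈ P) : j = k := by
  simp only [pairPartitions, mem_filter, mem_univ, true_and] at hP
  obtain ⟨hcard, hdisj, -⟩ := hP
  have hjk : ({a, j} : Finset ι) = {a, k} := by
    by_contra hne
    exact disjoint_left.mp (hdisj _ hj _ hk hne) (mem_insert_self a _) (mem_insert_self a _)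
  have haj : a ≠ j := fun h => by simpa [h] using hcard _ hj
  have hjak : j ∈ ({a, k} : Finset ι) := hjk ▸ mem_insert_of_mem (mem_singleton_self j)
  simpa [haj.symm] using hjak

theorem erase_mem_pairPartitions (hP : P ∈ pairPartitions S) (hj : {a, j} ∈ P) :
    P.erase {a, j} ∈ pairPartitions ((S.erase a).erase j) := by
  simp only [pairPartitions, mem_filter, mem_univ, true_and] at hP ⊢
  obtain ⟨hcard, hdisj, rfl⟩ := hP
  refine ⟨fun p hp => hcard p (mem_of_mem_erase hp),
    fun p hp q hq => hdisj p (mem_of_mem_erase hp) q (mem_of_mem_erase hq), ?_⟩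
  ext t
  simp only [mem_biUnion, mem_erase, id]
  constructor
  · rintro ⟨q, ⟨hq, hqP⟩, htq⟩
    have := disjoint_left.mp (hdisj q hqP _ hj hq) htq
    grind
  · rintro ⟨htj, hta, q, hqP, htq⟩
    exact ⟨q, ⟨by rintro rfl; simp_all, hqP⟩, htq⟩

theorem insert_mem_pairPartitions (hQ : P ∈ pairPartitions ((S.erase a).erase j)) (ha : a ∈ S)
    (hj : j ∈ S.erase a) : insert {a, j} P ∈ pairPartitions S := by
  simp only [pairPartitions, mem_filter, mem_univ, true_and] at hQ ⊢
  obtain ⟨hcard, hdisj, hP⟩ := hQ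
  have hpair : ∀ q ∈ P, Disjoint {a, j} q := fun q hq => by
    have hqS : q ⊆ (S.erase a).erase j := hP ▸ subset_biUnion_of_mem id hq
    rw [disjoint_left]
    intro t ht htq
    have htS := hqS htq
    grind
  refine ⟨?_, ?_, ?_⟩
  · simpa [card_pair (ne_of_mem_erase hj).symm] using hcard
  · simp only [mem_insert]
    rintro p (rfl | hp) q (rfl | hq) hpq
    · exact absurd rfl hpq
    · exact hpair q hq
    · exact (hpair p hp).symm
    · exact hdisj p hp q hq hpq
  · rw [biUnion_insert, hP, id]
    ext t
    simp only [mem_union, mem_insert, mem_singleton, mem_erase] at hj ⊢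
    grind

theorem pair_notMem_of_mem_pairPartitions (hQ : P ∈ pairPartitions ((S.erase a).erase j)) :
    {a, j} ∉ P := by
  simp only [pairPartitions, mem_filter, mem_univ, true_and] at hQ
  intro h
  have ha : a ∈ P.biUnion id := mem_biUnion.mpr ⟨_, h, mem_insert_self a {j}⟩
  simp [hQ.2.2] at ha

theorem sum_pairPartitions_prod {M : Type*} [CommSemiring M] (w : Finset ι → M) (ha : a ∈ S) :
    ∑ P ∈ pairPartitions S, ∏ p ∈ P, w p =
      ∑ j ∈ S.erase a, w {a, j} * ∑ P ∈ pairPartitions ((S.erase a).erase j), ∏ p ∈ P, w p := by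
  have hsplit : ∀ P ∈ pairPartitions S,
      ∏ p ∈ P, w p = ∑ j ∈ S.erase a, if {a, j} ∈ P then ∏ p ∈ P, w p else 0 := by
    intro P hP
    obtain ⟨j, hj, hjP⟩ := exists_pair_mem_of_mem_pairPartitions hP ha
    rw [sum_eq_single_of_mem j hj fun k _ hkj =>
      if_neg fun hk => hkj (eq_of_pair_mem_pairPartitions hP hk hjP), if_pos hjP]
  rw [sum_congr rfl hsplit, sum_comm]
  refine sum_congr rfl fun j hj => ?_
  rw [← sum_filter, mul_sum]
  refine sum_nbij' (·.erase {a, j}) (insert {a, j}) ?_ ?_ ?_ ?_ ?_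
  · intro P hP
    exact erase_mem_pairPartitions (mem_filter.mp hP).1 (mem_filter.mp hP).2
  · intro Q hQ
    exact mem_filter.mpr ⟨insert_mem_pairPartitions hQ ha hj, mem_insert_self _ _⟩
  · intro P hP
    exact insert_erase (mem_filter.mp hP).2
  · intro Q hQ
    exact erase_insert (pair_notMem_of_mem_pairPartitions hQ)
  · intro P hP
    exact (mul_prod_erase P w (mem_filter.mp hP).2).symm

end PairPartitions

theorem prod_pair_prod_pair_ite_lt {ι M : Type*} [LinearOrder ι] [CommMonoid M] (f : ι → ι → M)
    (hf : ∀ m n, f m n = f n m) {a j : ι} (haj : a ≠ j) :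
    ∏ m ∈ {a, j}, ∏ n ∈ {a, j}, (if m < n then f m n else 1) = f a j := by
  rcases haj.lt_or_gt with h | h
  · simp [prod_pair haj, h, h.not_gt]
  · simp [prod_pair haj, h, h.not_gt, hf j a]

section Bmat

variable {R : ℕ} (x c : Fin R → ℝ)

theorem Bmat_transpose : (Bmat x c)ᵀ = -Bmat x c := by
  ext m n
  rcases eq_or_ne m n with rfl | h
  · simp [Bmat]
  · simp only [Bmat, Matrix.transpose_apply, Matrix.neg_apply, Matrix.of_apply, if_neg h,
      if_neg h.symm]
    rw [mul_comm (c n), ← div_neg, neg_sub]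

theorem Bmat_mul_Bmat (hx : Function.Injective x) {a u v : Fin R} (hva : v ≠ a) (hau : a ≠ u)
    (hvu : v ≠ u) :
    Bmat x c v a * Bmat x c a u = Bmat x c v u * (c a ^ 2 * ((x a - x u)⁻¹ + (x v - x a)⁻¹)) := by
  have hau' : x a - x u ≠ 0 := sub_ne_zero.mpr (hx.ne hau)
  have hva' : x v - x a ≠ 0 := sub_ne_zero.mpr (hx.ne hva)
  have hvu' : x v - x u ≠ 0 := sub_ne_zero.mpr (hx.ne hvu)
  simp only [Bmat, Matrix.of_apply, if_neg hva, if_neg hau, if_neg hvu]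
  field_simp
  ring

theorem sum_Bmat_mul_Bmat_mul_prod_eq_zero (hx : Function.Injective x) {T : Finset (Fin R)}
    {a : Fin R} (ha : a ∉ T) {τ : Perm (Fin R)} (hτ : τ.support = T) :
    ∑ u ∈ T, Bmat x c (τ u) a * Bmat x c a u * ∏ i ∈ T.erase u, Bmat x c (τ i) i = 0 := by
  have hterm : ∀ u ∈ T, Bmat x c (τ u) a * Bmat x c a u * ∏ i ∈ T.erase u, Bmat x c (τ i) i =
      c a ^ 2 * (∏ i ∈ T, Bmat x c (τ i) i) * ((x a - x u)⁻¹ + (x (τ u) - x a)⁻¹) := by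
    intro u hu
    have huτ : u ∈ τ.support := hτ ▸ hu
    have hτu : τ u ∈ T := hτ ▸ Perm.apply_mem_support.mpr huτ
    rw [Bmat_mul_Bmat x c hx (ne_of_mem_of_not_mem hτu ha) (ne_of_mem_of_not_mem hu ha).symm
      (Perm.mem_support.mp huτ), ← mul_prod_erase T (fun i => Bmat x c (τ i) i) hu]
    ring
  have hreindex : ∑ u ∈ T, (x (τ u) - x a)⁻¹ = ∑ u ∈ T, (x u - x a)⁻¹ :=
    Perm.sum_comp τ T (fun v => (x v - x a)⁻¹) (hτ ▸ fun v hv => Perm.mem_support.mpr hv)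
  rw [sum_congr rfl hterm, ← mul_sum, sum_add_distrib, hreindex, ← sum_add_distrib]
  refine mul_eq_zero_of_right _ (sum_eq_zero fun u _ => ?_)
  rw [← neg_sub (x a), inv_neg, add_neg_cancel]

theorem derangementSum_Bmat_of_mem (hx : Function.Injective x) {S : Finset (Fin R)} {a : Fin R}
    (ha : a ∈ S) :
    (Bmat x c).derangementSum S =
      ∑ u ∈ S.erase a, Bmat x c a u ^ 2 * (Bmat x c).derangementSum ((S.erase a).erase u) := by
  rw [derangementSum_eq_sub_of_mem _ ha, sub_eq_self.mpr (sum_eq_zero fun τ hτ => by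
    rw [sum_Bmat_mul_Bmat_mul_prod_eq_zero x c hx (notMem_erase a S) (mem_filter.mp hτ).2,
      mul_zero])]
  refine sum_congr rfl fun u _ => ?_
  rw [← transpose_apply (Bmat x c) a u, Bmat_transpose, Matrix.neg_apply]
  ring

theorem derangementSum_Bmat_eq_sum_pairPartitions (hx : Function.Injective x)
    (S : Finset (Fin R)) :
    (Bmat x c).derangementSum S = ∑ P ∈ pairPartitions S,
      ∏ p ∈ P, ∏ m ∈ p, ∏ n ∈ p, if m < n then Bmat x c m n ^ 2 else 1 := by
  induction S using Finset.strongInduction with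
  | H S ih =>
    rcases S.eq_empty_or_nonempty with rfl | ⟨a, ha⟩
    · simp [derangementSum_empty, pairPartitions_empty]
    rw [derangementSum_Bmat_of_mem x c hx ha, sum_pairPartitions_prod _ ha]
    refine sum_congr rfl fun j hj => ?_
    have hsymm : ∀ m n, Bmat x c m n ^ 2 = Bmat x c n m ^ 2 := fun m n => by
      rw [← transpose_apply (Bmat x c) n m, Bmat_transpose, Matrix.neg_apply, neg_sq]
    rw [ih _ ((erase_subset j _).trans_ssubset (erase_ssubset ha)),
      prod_pair_prod_pair_ite_lt _ hsymm (ne_of_mem_erase hj).symm]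

end Bmat

/-- If `R` is odd then `det B(x,c) = 0`; if `R` is even then `det B(x,c)` is the
sum, over all partitions `P` of `{1,…,R}` into unordered pairs, of the product
over the pairs `{m,n} ∈ P` of `b_{m,n}²`. -/
theorem det_Bmat {R : ℕ} (x c : Fin R → ℝ) (hx : Function.Injective x) :
    (Odd R → (Bmat x c).det = 0) ∧
    (Even R → (Bmat x c).det =
      ∑ P ∈ Finset.univ.filter
        (fun P : Finset (Finset (Fin R)) =>
          (∀ p ∈ P, p.card = 2) ∧
          (∀ p ∈ P, ∀ q ∈ P, p ≠ q → Disjoint p q) ∧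
          P.biUnion id = Finset.univ),
        ∏ p ∈ P, ∏ m ∈ p, ∏ n ∈ p, if m < n then (Bmat x c m n) ^ 2 else 1) := by
  refine ⟨fun hodd => det_eq_zero_of_transpose_eq_neg (Bmat_transpose x c) (by simpa using hodd),
    fun _ => ?_⟩
  rw [det_eq_derangementSum_univ _ fun i => by simp [Bmat],
    derangementSum_Bmat_eq_sum_pairPartitions x c hx]
  rfl
end

section
/- Let x = (x_1,…,x_R) be a vector of distinct real numbers, c = (c_1,…,c_R) a vector of real numbers, B = B(x,c), 1 ≤ n ≤ R and k ≥ 2 an integer. Then (B^k)_{n,n} = − Σ_{r=0}^{k−2} Σ_{l ≠ n} b_{n,l}² · ((B_{−n})^r)_{l,l} · (B^{k−r−2})_{n,n}, where B_{−n} is the matrix B with the n-th row and column removed. -/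
/-- The matrix `B` with the `n`-th row and column removed, indexed by the
remaining indices. -/
noncomputable def Bminus {R : ℕ} (x c : Fin R → ℝ) (n : Fin R) :
    Matrix {m : Fin R // m ≠ n} {m : Fin R // m ≠ n} ℝ :=
  (Bmat x c).submatrix (fun i : {m : Fin R // m ≠ n} => (i : Fin R))
    (fun i : {m : Fin R // m ≠ n} => (i : Fin R))

section Aux
open Matrix
variable {R : ℕ} (x c : Fin R → ℝ) (n : Fin R)

lemma split_sum (f : Fin R → ℝ) :
    ∑ m, f m = f n + ∑ l : {m : Fin R // m ≠ n}, f l := by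
  rw [← Finset.sum_subtype (Finset.univ.erase n)
      (fun m => by simp [Finset.mem_erase]) f]
  exact (Finset.add_sum_erase _ f (Finset.mem_univ n)).symm

lemma Bmat_antisymm (m l : Fin R) : Bmat x c l m = - Bmat x c m l := by
  unfold Bmat
  by_cases h : m = l
  · subst h; simp
  · simp only [Matrix.of_apply, if_neg (Ne.symm h), if_neg h]
    rw [show x l - x m = -(x m - x l) by ring, div_neg, mul_comm]

lemma Bminus_antisymm (l l' : {m : Fin R // m ≠ n}) :
    Bminus x c n l l' = - Bminus x c n l' l := by
  simpa [Bminus] using Bmat_antisymm x c (l' : Fin R) l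

lemma antisym_pow_apply {ι : Type*} [Fintype ι] [DecidableEq ι]
    (A : Matrix ι ι ℝ) (hA : ∀ i j, A i j = - A j i) (r : ℕ) (i j : ι) :
    (A ^ r) j i = (-1 : ℝ) ^ r * (A ^ r) i j := by
  have hT : Aᵀ = -A := by ext a b; simp [Matrix.transpose_apply, hA a b]
  have h1 : (A ^ r)ᵀ = (-A) ^ r := by rw [Matrix.transpose_pow, hT]
  have h2 : (A ^ r) j i = ((A ^ r)ᵀ) i j := rfl
  rcases Nat.even_or_odd r with he | ho
  · rw [h2, h1, he.neg_pow, he.neg_one_pow, one_mul]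
  · rw [h2, h1, ho.neg_pow, ho.neg_one_pow, Matrix.neg_apply, neg_one_mul]

lemma sym_sum (hx : Function.Injective x) (r : ℕ) :
    ∑ l : {m : Fin R // m ≠ n}, ∑ l' : {m : Fin R // m ≠ n},
      Bmat x c n l * ((Bminus x c n) ^ r) l l' * Bmat x c n l' =
    ∑ l : {m : Fin R // m ≠ n}, (Bmat x c n l) ^ 2 * ((Bminus x c n) ^ r) l l := by
  set A := Bminus x c n with hA
  have hAanti : ∀ i j : {m : Fin R // m ≠ n}, A i j = - A j i := by
    rw [hA]; exact fun i j => Bminus_antisymm x c n i j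
  have hAdiag : ∀ l : {m : Fin R // m ≠ n}, A l l = 0 := by
    intro l; simp [hA, Bminus, Bmat]
  have key : ∀ l l' : {m : Fin R // m ≠ n},
      Bmat x c n l * (A ^ r) l l' * Bmat x c n l' =
      (if l' = l then (Bmat x c n l) ^ 2 * (A ^ r) l l else 0)
      + c n ^ 2 * ((x n - x l)⁻¹ - (x n - x l')⁻¹) * (A l l' * (A ^ r) l l') := by
    intro l l'
    by_cases h : l' = l
    · subst h
      rw [if_pos rfl, hAdiag, sub_self]
      ring
    · rw [if_neg h]
      have hcoene : (l' : Fin R) ≠ (l : Fin R) := fun hc => h (Subtype.ext hc)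
      have hxl : x n - x l ≠ 0 := sub_ne_zero.mpr (hx.ne (Ne.symm l.prop))
      have hxl' : x n - x l' ≠ 0 := sub_ne_zero.mpr (hx.ne (Ne.symm l'.prop))
      have hxll' : x (l : Fin R) - x l' ≠ 0 := sub_ne_zero.mpr (hx.ne (Ne.symm hcoene))
      have hv : Bmat x c n l * Bmat x c n l' =
          c n ^ 2 * ((x n - x l)⁻¹ - (x n - x l')⁻¹) * A l l' := by
        simp only [hA, Bminus, Matrix.submatrix_apply, Bmat, Matrix.of_apply,
          if_neg (Ne.symm l.prop), if_neg (Ne.symm l'.prop), if_neg (Ne.symm hcoene)]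
        field_simp
        ring
      calc Bmat x c n l * (A ^ r) l l' * Bmat x c n l'
          = (Bmat x c n l * Bmat x c n l') * (A ^ r) l l' := by ring
        _ = _ := by rw [hv]; ring
  simp only [key, Finset.sum_add_distrib]
  have hdiag : ∀ l : {m : Fin R // m ≠ n},
      (∑ l' : {m : Fin R // m ≠ n},
        if l' = l then (Bmat x c n l) ^ 2 * (A ^ r) l l else 0)
      = (Bmat x c n l) ^ 2 * (A ^ r) l l := by
    intro l; simp
  simp only [hdiag]
  have hzero : (∑ l : {m : Fin R // m ≠ n}, ∑ l' : {m : Fin R // m ≠ n},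
      c n ^ 2 * ((x n - x l)⁻¹ - (x n - x l')⁻¹) * (A l l' * (A ^ r) l l')) = 0 := by
    have hsplit : ∀ l l' : {m : Fin R // m ≠ n},
        c n ^ 2 * ((x n - x l)⁻¹ - (x n - x l')⁻¹) * (A l l' * (A ^ r) l l')
        = c n ^ 2 * ((x n - x l)⁻¹ * (A l l' * (A ^ r) l l'))
          - c n ^ 2 * ((x n - x l')⁻¹ * (A l l' * (A ^ r) l l')) := by
      intro l l'; ring
    simp only [hsplit, Finset.sum_sub_distrib]
    rw [Finset.sum_comm (f := fun (l l' : {m : Fin R // m ≠ n}) => c n ^ 2 * ((x n - x l'.1)⁻¹ * (A l l' * (A ^ r) l l')))]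
    rw [← Finset.sum_sub_distrib]
    have : ∀ l : {m : Fin R // m ≠ n},
        (∑ l' : {m : Fin R // m ≠ n},
          c n ^ 2 * ((x n - x l)⁻¹ * (A l l' * (A ^ r) l l')))
        - (∑ l' : {m : Fin R // m ≠ n},
          c n ^ 2 * ((x n - x l)⁻¹ * (A l' l * (A ^ r) l' l))) = 0 := by
      intro l
      rw [← Finset.sum_sub_distrib]
      have hinner : ∀ l' : {m : Fin R // m ≠ n},
          c n ^ 2 * ((x n - x l)⁻¹ * (A l l' * (A ^ r) l l'))
          - c n ^ 2 * ((x n - x l)⁻¹ * (A l' l * (A ^ r) l' l))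
          = c n ^ 2 * (x n - x l)⁻¹ * (((-1 : ℝ) ^ r + 1) * (A l l' * (A ^ r) l' l)) := by
        intro l'
        rw [hAanti l' l, antisym_pow_apply A hAanti r l' l]
        ring
      simp only [hinner]
      rw [← Finset.mul_sum, ← Finset.mul_sum]
      have hs : ∑ l' : {m : Fin R // m ≠ n}, A l l' * (A ^ r) l' l = (A ^ (r + 1)) l l := by
        rw [pow_succ' A r, Matrix.mul_apply]
      rw [hs]
      have hP := antisym_pow_apply A hAanti (r + 1) l l
      have : ((-1 : ℝ) ^ r + 1) * (A ^ (r + 1)) l l = 0 := by linear_combination hP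
      rw [this, mul_zero]
    exact Finset.sum_eq_zero fun l _ => this l
  rw [hzero, add_zero]

lemma row_decomp (j : ℕ) (l' : {m : Fin R // m ≠ n}) :
    ((Bmat x c) ^ j) n l' =
      ∑ r ∈ Finset.range j, ((Bmat x c) ^ (j - 1 - r)) n n *
        ∑ l : {m : Fin R // m ≠ n}, Bmat x c n l * ((Bminus x c n) ^ r) l l' := by
  induction j generalizing l' with
  | zero => simp [Matrix.one_apply_ne (Ne.symm l'.prop)]
  | succ j ih =>
    have hBA : ∀ (a b : {m : Fin R // m ≠ n}),
        Bmat x c (a : Fin R) (b : Fin R) = Bminus x c n a b := fun a b => rfl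
    rw [pow_succ, Matrix.mul_apply,
      split_sum n (fun m => ((Bmat x c) ^ j) n m * Bmat x c m (l' : Fin R))]
    simp only [ih, hBA]
    rw [Finset.sum_range_succ']
    have h0 : ((Bmat x c) ^ (j + 1 - 1 - 0)) n n *
        (∑ l : {m : Fin R // m ≠ n}, Bmat x c n l * ((Bminus x c n) ^ 0) l l')
        = ((Bmat x c) ^ j) n n * Bmat x c n l' := by
      simp [Matrix.one_apply]
    rw [h0]
    have he : ∀ r : ℕ, j + 1 - 1 - (r + 1) = j - 1 - r := fun r => by omega
    simp only [he]
    have main :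
        (∑ l : {m : Fin R // m ≠ n},
          (∑ r ∈ Finset.range j, ((Bmat x c) ^ (j - 1 - r)) n n *
            ∑ l'' : {m : Fin R // m ≠ n}, Bmat x c n l'' * ((Bminus x c n) ^ r) l'' l)
            * Bminus x c n l l')
        = ∑ r ∈ Finset.range j, ((Bmat x c) ^ (j - 1 - r)) n n *
            ∑ l'' : {m : Fin R // m ≠ n}, Bmat x c n l'' * ((Bminus x c n) ^ (r + 1)) l'' l' := by
      simp only [Finset.sum_mul]
      rw [Finset.sum_comm]
      refine Finset.sum_congr rfl fun r _ => ?_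
      have hp : ∀ l'' : {m : Fin R // m ≠ n}, ((Bminus x c n) ^ (r + 1)) l'' l'
          = ∑ l : {m : Fin R // m ≠ n}, ((Bminus x c n) ^ r) l'' l * Bminus x c n l l' :=
        fun l'' => by rw [pow_succ, Matrix.mul_apply]
      simp only [hp, Finset.mul_sum, Finset.sum_mul]
      rw [Finset.sum_comm]
      exact Finset.sum_congr rfl fun l'' _ => Finset.sum_congr rfl fun l _ => by ring
    rw [main, add_comm]

lemma cross_sum (hx : Function.Injective x) (r : ℕ) :
    ∑ l : {m : Fin R // m ≠ n},
      (∑ l'' : {m : Fin R // m ≠ n}, Bmat x c n l'' * ((Bminus x c n) ^ r) l'' l)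
        * Bmat x c (l : Fin R) n
    = - ∑ l : {m : Fin R // m ≠ n}, (Bmat x c n l) ^ 2 * ((Bminus x c n) ^ r) l l := by
  have key : (∑ l : {m : Fin R // m ≠ n}, ∑ l'' : {m : Fin R // m ≠ n},
      Bmat x c n l'' * ((Bminus x c n) ^ r) l'' l * Bmat x c n l)
      = ∑ l : {m : Fin R // m ≠ n}, (Bmat x c n l) ^ 2 * ((Bminus x c n) ^ r) l l := by
    rw [Finset.sum_comm]
    exact sym_sum x c n hx r
  rw [← key, ← Finset.sum_neg_distrib]
  refine Finset.sum_congr rfl fun l _ => ?_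
  rw [Bmat_antisymm x c n l, ← Finset.sum_neg_distrib, Finset.sum_mul]
  exact Finset.sum_congr rfl fun l'' _ => by ring

end Aux

/-- For `k ≥ 2`,
`(B^k)_{n,n} = - Σ_{r=0}^{k-2} Σ_{l ≠ n} b_{n,l}² ((B_{-n})^r)_{l,l} (B^{k-r-2})_{n,n}`. -/
theorem diag_power_recursion {R : ℕ} (x c : Fin R → ℝ)
    (hx : Function.Injective x) (n : Fin R) (k : ℕ) (hk : 2 ≤ k) :
    ((Bmat x c) ^ k) n n =
      - ∑ r ∈ Finset.range (k - 1), ∑ l : {m : Fin R // m ≠ n},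
          (Bmat x c n l) ^ 2 * ((Bminus x c n) ^ r) l l *
            ((Bmat x c) ^ (k - r - 2)) n n := by
  obtain ⟨j, rfl⟩ : ∃ j, k = j + 2 := ⟨k - 2, by omega⟩
  rw [pow_succ, Matrix.mul_apply,
    split_sum n (fun m => ((Bmat x c) ^ (j + 1)) n m * Bmat x c m n)]
  have hBnn : Bmat x c n n = 0 := by simp [Bmat]
  rw [hBnn, mul_zero, zero_add]
  simp only [row_decomp x c n (j + 1)]
  simp only [Finset.sum_mul]
  rw [Finset.sum_comm]
  have hrange : (j + 2 - 1) = j + 1 := rfl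
  rw [hrange, ← Finset.sum_neg_distrib]
  refine Finset.sum_congr rfl fun r hr => ?_
  have hr' : r ≤ j := by simpa [Nat.lt_succ_iff] using hr
  have hj1 : j + 1 - 1 - r = j - r := by omega
  have hj2 : j + 2 - r - 2 = j - r := by omega
  rw [hj1]
  simp only [hj2]
  -- goal : ∑ l, (f * S l) * B l n = -(∑ l, v l ^ 2 * (A^r) l l * f)
  have pull : ∀ l : {m : Fin R // m ≠ n},
      (((Bmat x c) ^ (j - r)) n n *
        ∑ l'' : {m : Fin R // m ≠ n}, Bmat x c n l'' * ((Bminus x c n) ^ r) l'' l)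
        * Bmat x c (l : Fin R) n
      = ((Bmat x c) ^ (j - r)) n n *
        ((∑ l'' : {m : Fin R // m ≠ n}, Bmat x c n l'' * ((Bminus x c n) ^ r) l'' l)
          * Bmat x c (l : Fin R) n) := fun l => by ring
  simp only [pull]
  rw [← Finset.mul_sum, cross_sum x c n hx r]
  have pull2 : ∀ l : {m : Fin R // m ≠ n},
      (Bmat x c n l) ^ 2 * ((Bminus x c n) ^ r) l l * ((Bmat x c) ^ (j - r)) n n
      = ((Bmat x c) ^ (j - r)) n n *
        ((Bmat x c n l) ^ 2 * ((Bminus x c n) ^ r) l l) := fun l => by ring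
  simp only [pull2]
  rw [← Finset.mul_sum]
  ring
end

section
/- Fix integers R ≥ 1, k ≥ 1 and 1 ≤ n ≤ R. There exists a multivariate polynomial P with nonnegative real coefficients, in variables indexed by the unordered pairs {l,m} with 1 ≤ l < m ≤ R, such that for every vector x of distinct real numbers and every real vector c, one has (−1)^k · (B(x,c)^{2k})_{n,n} = P evaluated at the values (b_{l,m}(x,c)²)_{l<m}. Moreover, for every odd positive integer j, (B(x,c)^j)_{n,n} = 0. -/
namespace HilbAux

variable {R : ℕ}

/-- Restriction of `Bmat` to a subset `S` (zero outside `S × S`). -/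
noncomputable def Bres (x c : Fin R → ℝ) (S : Finset (Fin R)) :
    Matrix (Fin R) (Fin R) ℝ :=
  Matrix.of fun i j => if i ∈ S ∧ j ∈ S then Bmat x c i j else 0

lemma Bmat_apply (x c : Fin R → ℝ) (i j : Fin R) :
    Bmat x c i j = if i = j then 0 else c i * c j / (x i - x j) := rfl

lemma Bres_apply (x c : Fin R → ℝ) (S : Finset (Fin R)) (i j : Fin R) :
    Bres x c S i j = if i ∈ S ∧ j ∈ S then Bmat x c i j else 0 := rfl

lemma Bmat_skew (x c : Fin R → ℝ) (i j : Fin R) :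
    Bmat x c j i = - Bmat x c i j := by
  rw [Bmat_apply, Bmat_apply]
  by_cases h : i = j
  · subst h; simp
  · rw [if_neg (Ne.symm h), if_neg h]
    rw [show x j - x i = -(x i - x j) by ring, div_neg]
    ring

lemma Bmat_diag (x c : Fin R → ℝ) (n : Fin R) : Bmat x c n n = 0 := by
  rw [Bmat_apply]; simp

lemma Bres_skew (x c : Fin R → ℝ) (S : Finset (Fin R)) (i j : Fin R) :
    Bres x c S j i = - Bres x c S i j := by
  rw [Bres_apply, Bres_apply]
  by_cases h : i ∈ S ∧ j ∈ S
  · rw [if_pos ⟨h.2, h.1⟩, if_pos h, Bmat_skew]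
  · rw [if_neg (by tauto), if_neg h, neg_zero]

lemma Bres_diag (x c : Fin R → ℝ) (S : Finset (Fin R)) (n : Fin R) :
    Bres x c S n n = 0 := by
  rw [Bres_apply]
  split_ifs with h
  · exact Bmat_diag x c n
  · rfl

lemma Bres_erase_col (x c : Fin R → ℝ) (S : Finset (Fin R)) (n i : Fin R) :
    Bres x c (S.erase n) i n = 0 := by
  rw [Bres_apply, if_neg]
  intro h
  exact (Finset.mem_erase.mp h.2).1 rfl

lemma Bres_erase_row (x c : Fin R → ℝ) (S : Finset (Fin R)) (n j : Fin R) :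
    Bres x c (S.erase n) n j = 0 := by
  rw [Bres_apply, if_neg]
  intro h
  exact (Finset.mem_erase.mp h.1).1 rfl

section Skew

variable {M : Matrix (Fin R) (Fin R) ℝ}

lemma pow_skew (hM : ∀ i j, M j i = - M i j) (j : ℕ) :
    ∀ a b, (M ^ j) b a = (-1 : ℝ) ^ j * (M ^ j) a b := by
  induction j with
  | zero =>
    intro a b
    simp [Matrix.one_apply, eq_comm]
  | succ j ih =>
    intro a b
    calc (M ^ (j + 1)) b a = ∑ k, (M ^ j) b k * M k a := by
          rw [pow_succ, Matrix.mul_apply]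
      _ = ∑ k, ((-1 : ℝ) ^ j * (M ^ j) k b) * (-(M a k)) := by
          refine Finset.sum_congr rfl fun k _ => ?_
          rw [ih k b, hM a k]
      _ = (-1 : ℝ) ^ (j + 1) * ∑ k, M a k * (M ^ j) k b := by
          rw [Finset.mul_sum]
          refine Finset.sum_congr rfl fun k _ => ?_
          ring
      _ = (-1 : ℝ) ^ (j + 1) * (M ^ (j + 1)) a b := by
          rw [show M ^ (j + 1) = M * M ^ j from pow_succ' M j, Matrix.mul_apply]

lemma diag_pow_odd (hM : ∀ i j, M j i = - M i j) {j : ℕ} (hj : Odd j)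
    (n : Fin R) : (M ^ j) n n = 0 := by
  have h := pow_skew hM j n n
  rw [hj.neg_one_pow] at h
  linarith

lemma quadform_skew_odd (hM : ∀ i j, M j i = - M i j) {j : ℕ} (hj : Odd j)
    (u : Fin R → ℝ) :
    ∑ i, ∑ m, u i * ((M ^ j) i m * u m) = 0 := by
  have key : ∀ i m : Fin R, u i * ((M ^ j) i m * u m)
      = -(u m * ((M ^ j) m i * u i)) := by
    intro i m
    rw [pow_skew hM j m i, hj.neg_one_pow]
    ring
  have hs : (∑ i, ∑ m, u i * ((M ^ j) i m * u m))
      = -∑ i, ∑ m, u i * ((M ^ j) i m * u m) := by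
    nth_rewrite 2 [Finset.sum_comm]
    rw [← Finset.sum_neg_distrib]
    refine Finset.sum_congr rfl fun i _ => ?_
    rw [← Finset.sum_neg_distrib]
    exact Finset.sum_congr rfl fun m _ => key i m
  linarith

end Skew

/-- The key partial fraction identity. -/
lemma key_prod (x c : Fin R → ℝ) (hx : Function.Injective x)
    {l m n : Fin R} (hl : l ≠ n) (hm : m ≠ n) (hlm : l ≠ m) :
    Bmat x c l n * Bmat x c m n
      = Bmat x c l m * (c n ^ 2 / (x n - x l) - c n ^ 2 / (x n - x m)) := by
  have h1 : x l - x n ≠ 0 := sub_ne_zero.mpr fun h => hl (hx h)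
  have h2 : x m - x n ≠ 0 := sub_ne_zero.mpr fun h => hm (hx h)
  have h3 : x l - x m ≠ 0 := sub_ne_zero.mpr fun h => hlm (hx h)
  have h4 : x n - x l ≠ 0 := sub_ne_zero.mpr fun h => hl (hx h.symm)
  have h5 : x n - x m ≠ 0 := sub_ne_zero.mpr fun h => hm (hx h.symm)
  rw [Bmat_apply, Bmat_apply, Bmat_apply, if_neg hl, if_neg hm, if_neg hlm]
  field_simp
  ring

/-- Quadratic-form diagonal reduction identity. -/
lemma quadform_even (x c : Fin R → ℝ) (hx : Function.Injective x)
    (S : Finset (Fin R)) (n : Fin R) (hn : n ∈ S) (i : ℕ) :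
    ∑ l, ∑ m, Bres x c S l n
        * (((Bres x c (S.erase n)) ^ (2 * i)) l m * Bres x c S m n)
      = ∑ m ∈ S.erase n,
          (Bmat x c m n) ^ 2 * ((Bres x c (S.erase n)) ^ (2 * i)) m m := by
  classical
  set T := S.erase n with hT
  set K := Bres x c (S.erase n) with hKdef
  set M := K ^ (2 * i) with hMdef
  have hKskew : ∀ a b, K b a = - K a b := fun a b => Bres_skew x c _ a b
  have hMsymm : ∀ a b, M a b = M b a := by
    intro a b
    rw [hMdef, pow_skew hKskew (2 * i) b a, pow_mul]
    norm_num
  have hu0 : ∀ l, l ∉ T → Bres x c S l n = 0 := by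
    intro l hl
    by_cases hlS : l ∈ S
    · have hln : l = n := by
        by_contra hne
        exact hl (Finset.mem_erase.mpr ⟨hne, hlS⟩)
      subst hln
      exact Bres_diag x c S l
    · rw [Bres_apply, if_neg (by tauto)]
  have huB : ∀ l, l ∈ T → Bres x c S l n = Bmat x c l n := by
    intro l hl
    rw [Bres_apply, if_pos ⟨(Finset.mem_erase.mp hl).2, hn⟩]
  have step1 : (∑ l, ∑ m, Bres x c S l n * (M l m * Bres x c S m n))
      = ∑ l ∈ T, ∑ m ∈ T, Bmat x c l n * (M l m * Bmat x c m n) := by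
    rw [← Finset.sum_subset (Finset.subset_univ T)
      (fun l _ hl => by simp [hu0 l hl])]
    refine Finset.sum_congr rfl fun l hl => ?_
    rw [← Finset.sum_subset (Finset.subset_univ T)
      (fun m _ hm => by simp [hu0 m hm])]
    refine Finset.sum_congr rfl fun m hm => ?_
    rw [huB l hl, huB m hm]
  rw [step1]
  have step2 : ∀ l ∈ T, ∀ m ∈ T,
      Bmat x c l n * (M l m * Bmat x c m n)
        = (if l = m then (Bmat x c m n) ^ 2 * M m m else 0)
          + M l m * (Bmat x c l m
              * (c n ^ 2 / (x n - x l) - c n ^ 2 / (x n - x m))) := by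
    intro l hl m hm
    by_cases hlm : l = m
    · subst hlm
      rw [if_pos rfl, Bmat_diag x c l]
      ring
    · rw [if_neg hlm]
      have hln : l ≠ n := (Finset.mem_erase.mp hl).1
      have hmn : m ≠ n := (Finset.mem_erase.mp hm).1
      have hkey := key_prod x c hx hln hmn hlm
      calc Bmat x c l n * (M l m * Bmat x c m n)
          = M l m * (Bmat x c l n * Bmat x c m n) := by ring
        _ = M l m * (Bmat x c l m
              * (c n ^ 2 / (x n - x l) - c n ^ 2 / (x n - x m))) := by rw [hkey]
        _ = 0 + M l m * (Bmat x c l m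
              * (c n ^ 2 / (x n - x l) - c n ^ 2 / (x n - x m))) := by ring
  have hsplit : (∑ l ∈ T, ∑ m ∈ T, Bmat x c l n * (M l m * Bmat x c m n))
      = (∑ l ∈ T, ∑ m ∈ T, (if l = m then (Bmat x c m n) ^ 2 * M m m else 0))
        + ∑ l ∈ T, ∑ m ∈ T, M l m * (Bmat x c l m
            * (c n ^ 2 / (x n - x l) - c n ^ 2 / (x n - x m))) := by
    rw [← Finset.sum_add_distrib]
    refine Finset.sum_congr rfl fun l hl => ?_
    rw [← Finset.sum_add_distrib]
    exact Finset.sum_congr rfl fun m hm => step2 l hl m hm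
  rw [hsplit]
  have hdiag : (∑ l ∈ T, ∑ m ∈ T,
      (if l = m then (Bmat x c m n) ^ 2 * M m m else 0))
      = ∑ m ∈ T, (Bmat x c m n) ^ 2 * M m m := by
    calc (∑ l ∈ T, ∑ m ∈ T, (if l = m then (Bmat x c m n) ^ 2 * M m m else 0))
        = ∑ l ∈ T, (if l ∈ T then (Bmat x c l n) ^ 2 * M l l else 0) :=
          Finset.sum_congr rfl fun l _ =>
            Finset.sum_ite_eq T l (fun m => (Bmat x c m n) ^ 2 * M m m)
      _ = ∑ m ∈ T, (Bmat x c m n) ^ 2 * M m m :=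
          Finset.sum_congr rfl fun l hl => if_pos hl
  rw [hdiag]
  -- it remains to show the second (cross-term) sum vanishes
  have hinner : ∀ l ∈ T, (∑ m ∈ T, M l m * Bmat x c l m) = 0 := by
    intro l hl
    have hext : (∑ m ∈ T, M l m * Bmat x c l m) = ∑ m, M l m * K l m := by
      rw [← Finset.sum_subset (Finset.subset_univ T)
        (fun m _ hm => by
          rw [hKdef, Bres_apply, if_neg (by tauto), mul_zero])]
      refine Finset.sum_congr rfl fun m hm => ?_
      rw [hKdef, Bres_apply, if_pos ⟨hl, hm⟩]
    rw [hext]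
    have : (∑ m, M l m * K l m) = (K * M) l l := by
      rw [Matrix.mul_apply]
      refine Finset.sum_congr rfl fun m _ => ?_
      rw [hMsymm l m]
      ring
    rw [this, hMdef, ← pow_succ']
    exact diag_pow_odd hKskew ⟨i, by ring⟩ l
  have hcross : (∑ l ∈ T, ∑ m ∈ T, M l m * (Bmat x c l m
      * (c n ^ 2 / (x n - x l) - c n ^ 2 / (x n - x m)))) = 0 := by
    have hsplit2 : (∑ l ∈ T, ∑ m ∈ T, M l m * (Bmat x c l m
        * (c n ^ 2 / (x n - x l) - c n ^ 2 / (x n - x m))))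
        = (∑ l ∈ T, ∑ m ∈ T, M l m * Bmat x c l m * (c n ^ 2 / (x n - x l)))
          - ∑ l ∈ T, ∑ m ∈ T, M l m * Bmat x c l m * (c n ^ 2 / (x n - x m)) := by
      rw [← Finset.sum_sub_distrib]
      refine Finset.sum_congr rfl fun l _ => ?_
      rw [← Finset.sum_sub_distrib]
      refine Finset.sum_congr rfl fun m _ => ?_
      ring
    rw [hsplit2]
    have hswap : (∑ l ∈ T, ∑ m ∈ T, M l m * Bmat x c l m * (c n ^ 2 / (x n - x m)))
        = -∑ l ∈ T, ∑ m ∈ T, M l m * Bmat x c l m * (c n ^ 2 / (x n - x l)) := by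
      rw [Finset.sum_comm, ← Finset.sum_neg_distrib]
      refine Finset.sum_congr rfl fun m _ => ?_
      rw [← Finset.sum_neg_distrib]
      refine Finset.sum_congr rfl fun l _ => ?_
      rw [hMsymm l m, Bmat_skew x c m l]
      ring
    rw [hswap]
    have h1 : (∑ l ∈ T, ∑ m ∈ T, M l m * Bmat x c l m * (c n ^ 2 / (x n - x l)))
        = 0 := by
      refine Finset.sum_eq_zero fun l hl => ?_
      have : (∑ m ∈ T, M l m * Bmat x c l m * (c n ^ 2 / (x n - x l)))
          = (∑ m ∈ T, M l m * Bmat x c l m) * (c n ^ 2 / (x n - x l)) := by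
        rw [Finset.sum_mul]
      rw [this, hinner l hl, zero_mul]
    rw [h1]
    ring
  rw [hcross]
  ring

section Recursion

variable (x c : Fin R → ℝ) (S : Finset (Fin R)) (n : Fin R)

/-- Diagonal entry of a power of the restricted matrix. -/
noncomputable def fdiag (N : ℕ) : ℝ := ((Bres x c S) ^ N) n n

/-- `(K^j u) i` where `K` is the matrix restricted off `n` and `u` the link column. -/
noncomputable def Kvec (j : ℕ) (i : Fin R) : ℝ :=
  ∑ m, ((Bres x c (S.erase n)) ^ j) i m * Bres x c S m n

/-- First-return amplitude. -/
noncomputable def hval (j : ℕ) : ℝ := ∑ i, Bres x c S n i * Kvec x c S n j i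

lemma Kvec_zero (i : Fin R) : Kvec x c S n 0 i = Bres x c S i n := by
  unfold Kvec
  rw [pow_zero]
  simp [Matrix.one_apply, ite_mul]

lemma Kvec_succ (j : ℕ) (i : Fin R) :
    (∑ l, Bres x c (S.erase n) i l * Kvec x c S n j l)
      = Kvec x c S n (j + 1) i := by
  unfold Kvec
  calc (∑ l, Bres x c (S.erase n) i l
        * ∑ m, ((Bres x c (S.erase n)) ^ j) l m * Bres x c S m n)
      = ∑ l, ∑ m, Bres x c (S.erase n) i l
          * (((Bres x c (S.erase n)) ^ j) l m * Bres x c S m n) := by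
        refine Finset.sum_congr rfl fun l _ => ?_
        rw [Finset.mul_sum]
    _ = ∑ m, (∑ l, Bres x c (S.erase n) i l * ((Bres x c (S.erase n)) ^ j) l m)
          * Bres x c S m n := by
        rw [Finset.sum_comm]
        refine Finset.sum_congr rfl fun m _ => ?_
        rw [Finset.sum_mul]
        refine Finset.sum_congr rfl fun l _ => ?_
        ring
    _ = ∑ m, ((Bres x c (S.erase n)) ^ (j + 1)) i m * Bres x c S m n := by
        refine Finset.sum_congr rfl fun m _ => ?_
        rw [pow_succ', Matrix.mul_apply]

lemma Gdecomp (N : ℕ) : ∀ i : Fin R,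
    ((Bres x c S) ^ (N + 1)) i n
      = (∑ t ∈ Finset.range (N + 1), fdiag x c S n t * Kvec x c S n (N - t) i)
        + (if i = n then fdiag x c S n (N + 1) else 0) := by
  induction N with
  | zero =>
    intro i
    have hf0 : fdiag x c S n 0 = 1 := by
      unfold fdiag; rw [pow_zero, Matrix.one_apply_eq]
    have hf1 : fdiag x c S n 1 = 0 := by
      unfold fdiag; rw [pow_one]; exact Bres_diag x c S n
    rw [Finset.sum_range_one, hf0, hf1, Kvec_zero, pow_one]
    simp
  | succ N ih =>
    intro i
    have hstep : ((Bres x c S) ^ (N + 1 + 1)) i n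
        = ∑ j, Bres x c S i j * ((Bres x c S) ^ (N + 1)) j n := by
      rw [pow_succ', Matrix.mul_apply]
    rw [hstep]
    have hdecomp : ∀ j, Bres x c S i j
        = Bres x c (S.erase n) i j + (if j = n then Bres x c S i n else 0)
          + (if i = n ∧ j ≠ n then Bres x c S n j else 0) := by
      intro j
      by_cases hi : i = n <;> by_cases hj : j = n
      · subst hi; subst hj
        simp [Bres_diag, Bres_erase_col]
      · subst hi
        rw [if_neg hj, if_pos ⟨rfl, hj⟩, Bres_erase_row]
        ring
      · subst hj
        rw [if_pos rfl, Bres_erase_col, if_neg (by tauto)]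
        ring
      · rw [if_neg hj, if_neg (by tauto)]
        rw [Bres_apply, Bres_apply]
        have hcond : (i ∈ S.erase n ∧ j ∈ S.erase n) ↔ (i ∈ S ∧ j ∈ S) := by
          simp [Finset.mem_erase, hi, hj]
        by_cases hc : i ∈ S ∧ j ∈ S
        · rw [if_pos hc, if_pos (hcond.mpr hc)]; ring
        · rw [if_neg hc, if_neg (fun h => hc (hcond.mp h))]; ring
    calc (∑ j, Bres x c S i j * ((Bres x c S) ^ (N + 1)) j n)
        = ∑ j, (Bres x c (S.erase n) i j * ((Bres x c S) ^ (N + 1)) j n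
            + (if j = n then Bres x c S i n else 0) * ((Bres x c S) ^ (N + 1)) j n
            + (if i = n ∧ j ≠ n then Bres x c S n j else 0)
                * ((Bres x c S) ^ (N + 1)) j n) := by
          refine Finset.sum_congr rfl fun j _ => ?_
          rw [hdecomp j]; ring
      _ = (∑ j, Bres x c (S.erase n) i j * ((Bres x c S) ^ (N + 1)) j n)
          + Bres x c S i n * fdiag x c S n (N + 1)
          + (if i = n then fdiag x c S n (N + 2) else 0) := by
          rw [Finset.sum_add_distrib, Finset.sum_add_distrib]
          congr 1
          · congr 1
            calc (∑ j, (if j = n then Bres x c S i n else 0)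
                  * ((Bres x c S) ^ (N + 1)) j n)
                = ∑ j, (if j = n then Bres x c S i n
                    * ((Bres x c S) ^ (N + 1)) n n else 0) := by
                  refine Finset.sum_congr rfl fun j _ => ?_
                  by_cases hj : j = n
                  · subst hj; rw [if_pos rfl, if_pos rfl]
                  · rw [if_neg hj, if_neg hj, zero_mul]
              _ = Bres x c S i n * fdiag x c S n (N + 1) := by
                  rw [Finset.sum_ite_eq' Finset.univ n
                    (fun _ => Bres x c S i n * ((Bres x c S) ^ (N + 1)) n n)]
                  rw [if_pos (Finset.mem_univ n)]
                  rfl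
          · calc (∑ j, (if i = n ∧ j ≠ n then Bres x c S n j else 0)
                  * ((Bres x c S) ^ (N + 1)) j n)
                = ∑ j, (if i = n then Bres x c S n j
                    * ((Bres x c S) ^ (N + 1)) j n else 0) := by
                  refine Finset.sum_congr rfl fun j _ => ?_
                  by_cases hi : i = n
                  · by_cases hj : j = n
                    · subst hj
                      rw [if_neg (by tauto), if_pos hi]
                      simp [Bres_diag]
                    · rw [if_pos ⟨hi, hj⟩, if_pos hi]
                  · rw [if_neg (by tauto), if_neg hi, zero_mul]
              _ = (if i = n then fdiag x c S n (N + 2) else 0) := by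
                  by_cases hi : i = n
                  · rw [if_pos hi]
                    simp only [if_pos hi]
                    have : fdiag x c S n (N + 2)
                        = ∑ j, Bres x c S n j * ((Bres x c S) ^ (N + 1)) j n := by
                      unfold fdiag
                      rw [pow_succ', Matrix.mul_apply]
                    rw [this]
                  · rw [if_neg hi]
                    simp only [if_neg hi]
                    exact Finset.sum_const_zero
      _ = (∑ t ∈ Finset.range (N + 1 + 1),
            fdiag x c S n t * Kvec x c S n (N + 1 - t) i)
          + (if i = n then fdiag x c S n (N + 1 + 1) else 0) := by
          congr 1
          · -- main term: apply IH inside and regroup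
            have hKin : Bres x c (S.erase n) i n = 0 := Bres_erase_col x c S n i
            calc (∑ j, Bres x c (S.erase n) i j * ((Bres x c S) ^ (N + 1)) j n)
                  + Bres x c S i n * fdiag x c S n (N + 1)
                = (∑ j, Bres x c (S.erase n) i j
                    * ((∑ t ∈ Finset.range (N + 1),
                        fdiag x c S n t * Kvec x c S n (N - t) j)
                      + (if j = n then fdiag x c S n (N + 1) else 0)))
                  + Bres x c S i n * fdiag x c S n (N + 1) := by
                  congr 1
                  refine Finset.sum_congr rfl fun j _ => ?_
                  rw [ih j]
              _ = (∑ t ∈ Finset.range (N + 1), fdiag x c S n t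
                    * (∑ j, Bres x c (S.erase n) i j * Kvec x c S n (N - t) j))
                  + Bres x c S i n * fdiag x c S n (N + 1) := by
                  congr 1
                  calc (∑ j, Bres x c (S.erase n) i j
                        * ((∑ t ∈ Finset.range (N + 1),
                            fdiag x c S n t * Kvec x c S n (N - t) j)
                          + (if j = n then fdiag x c S n (N + 1) else 0)))
                      = ∑ j, ((∑ t ∈ Finset.range (N + 1), fdiag x c S n t
                          * (Bres x c (S.erase n) i j * Kvec x c S n (N - t) j))
                          + (if j = n then Bres x c (S.erase n) i j
                              * fdiag x c S n (N + 1) else 0)) := by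
                        refine Finset.sum_congr rfl fun j _ => ?_
                        rw [mul_add, Finset.mul_sum]
                        congr 1
                        · refine Finset.sum_congr rfl fun t _ => by ring
                        · by_cases hj : j = n
                          · rw [if_pos hj, if_pos hj]
                          · rw [if_neg hj, if_neg hj, mul_zero]
                    _ = (∑ j, ∑ t ∈ Finset.range (N + 1), fdiag x c S n t
                          * (Bres x c (S.erase n) i j * Kvec x c S n (N - t) j))
                        + ∑ j, (if j = n then Bres x c (S.erase n) i j
                            * fdiag x c S n (N + 1) else 0) := by
                        rw [Finset.sum_add_distrib]
                    _ = (∑ t ∈ Finset.range (N + 1), fdiag x c S n t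
                          * (∑ j, Bres x c (S.erase n) i j * Kvec x c S n (N - t) j))
                        + 0 := by
                        congr 1
                        · rw [Finset.sum_comm]
                          refine Finset.sum_congr rfl fun t _ => ?_
                          rw [Finset.mul_sum]
                        · rw [Finset.sum_ite_eq' Finset.univ n
                            (fun j => Bres x c (S.erase n) i j * fdiag x c S n (N + 1))]
                          rw [if_pos (Finset.mem_univ n), hKin, zero_mul]
                    _ = ∑ t ∈ Finset.range (N + 1), fdiag x c S n t
                          * (∑ j, Bres x c (S.erase n) i j * Kvec x c S n (N - t) j) := by
                        ring
              _ = (∑ t ∈ Finset.range (N + 1), fdiag x c S n t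
                    * Kvec x c S n (N + 1 - t) i)
                  + fdiag x c S n (N + 1) * Kvec x c S n 0 i := by
                  congr 1
                  · refine Finset.sum_congr rfl fun t ht => ?_
                    rw [Kvec_succ]
                    congr 2
                    have := Finset.mem_range.mp ht
                    omega
                  · rw [Kvec_zero]
                    ring
              _ = ∑ t ∈ Finset.range (N + 1 + 1),
                    fdiag x c S n t * Kvec x c S n (N + 1 - t) i := by
                  rw [Finset.sum_range_succ
                    (fun t => fdiag x c S n t * Kvec x c S n (N + 1 - t) i) (N + 1),
                    Nat.sub_self]

lemma frec (N : ℕ) :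
    fdiag x c S n (N + 2)
      = ∑ t ∈ Finset.range (N + 1), fdiag x c S n t * hval x c S n (N - t) := by
  have h0 : fdiag x c S n (N + 2)
      = ∑ j, Bres x c S n j * ((Bres x c S) ^ (N + 1)) j n := by
    unfold fdiag
    rw [pow_succ', Matrix.mul_apply]
  rw [h0]
  calc (∑ j, Bres x c S n j * ((Bres x c S) ^ (N + 1)) j n)
      = ∑ j, Bres x c S n j
          * ((∑ t ∈ Finset.range (N + 1), fdiag x c S n t * Kvec x c S n (N - t) j)
            + (if j = n then fdiag x c S n (N + 1) else 0)) := by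
        refine Finset.sum_congr rfl fun j _ => ?_
        rw [Gdecomp x c S n N j]
    _ = (∑ j, ∑ t ∈ Finset.range (N + 1), fdiag x c S n t
          * (Bres x c S n j * Kvec x c S n (N - t) j))
        + ∑ j, (if j = n then Bres x c S n j * fdiag x c S n (N + 1) else 0) := by
        rw [← Finset.sum_add_distrib]
        refine Finset.sum_congr rfl fun j _ => ?_
        rw [mul_add, Finset.mul_sum]
        congr 1
        · refine Finset.sum_congr rfl fun t _ => by ring
        · by_cases hj : j = n
          · rw [if_pos hj, if_pos hj]
          · rw [if_neg hj, if_neg hj, mul_zero]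
    _ = ∑ t ∈ Finset.range (N + 1), fdiag x c S n t * hval x c S n (N - t) := by
        have h1 : (∑ j, (if j = n then Bres x c S n j * fdiag x c S n (N + 1) else 0))
            = 0 := by
          rw [Finset.sum_ite_eq' Finset.univ n
            (fun j => Bres x c S n j * fdiag x c S n (N + 1))]
          rw [if_pos (Finset.mem_univ n), Bres_diag, zero_mul]
        rw [h1, add_zero, Finset.sum_comm]
        refine Finset.sum_congr rfl fun t _ => ?_
        unfold hval
        rw [Finset.mul_sum]

lemma hval_neg (j : ℕ) :
    hval x c S n j
      = -∑ i, ∑ m, Bres x c S i n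
          * (((Bres x c (S.erase n)) ^ j) i m * Bres x c S m n) := by
  unfold hval Kvec
  rw [← Finset.sum_neg_distrib]
  refine Finset.sum_congr rfl fun i _ => ?_
  rw [Bres_skew x c S i n, Finset.mul_sum, ← Finset.sum_neg_distrib]
  refine Finset.sum_congr rfl fun m _ => ?_
  ring

lemma hval_odd {j : ℕ} (hj : Odd j) : hval x c S n j = 0 := by
  rw [hval_neg]
  rw [quadform_skew_odd (Bres_skew x c (S.erase n)) hj (fun i => Bres x c S i n)]
  exact neg_zero

lemma hval_even (hx : Function.Injective x) (hn : n ∈ S) (i : ℕ) :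
    hval x c S n (2 * i)
      = -∑ m ∈ S.erase n,
          (Bmat x c m n) ^ 2 * ((Bres x c (S.erase n)) ^ (2 * i)) m m := by
  rw [hval_neg, quadform_even x c hx S n hn i]

end Recursion

/-- Index type of unordered pairs. -/
abbrev PairIdx (R : ℕ) := {p : Fin R × Fin R // p.1 < p.2}

/-- Variable attached to the unordered pair `{n, m}`. -/
noncomputable def eVar (R : ℕ) (n m : Fin R) : MvPolynomial (PairIdx R) ℝ :=
  if h : n < m then MvPolynomial.X ⟨(n, m), h⟩
  else if h' : m < n then MvPolynomial.X ⟨(m, n), h'⟩ else 0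

/-- The universal polynomials, defined via the first-return recursion. -/
noncomputable def Ppoly (R : ℕ) : ℕ → Finset (Fin R) → Fin R → MvPolynomial (PairIdx R) ℝ
  | 0, _, _ => 1
  | (k + 1), S, n =>
    ∑ t ∈ (Finset.range (k + 1)).attach,
      Ppoly R t.1 S n *
        ∑ m ∈ S.erase n, eVar R n m * Ppoly R (k - t.1) (S.erase n) m
termination_by k _ _ => k
decreasing_by
  · exact Finset.mem_range.mp t.2
  · exact Nat.lt_succ_of_le (Nat.sub_le k t.1)

lemma eVar_coeff_nonneg (n m : Fin R) (d : PairIdx R →₀ ℕ) :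
    0 ≤ (eVar R n m).coeff d := by
  unfold eVar
  split_ifs with h1 h2
  · rw [MvPolynomial.coeff_X']
    split_ifs <;> norm_num
  · rw [MvPolynomial.coeff_X']
    split_ifs <;> norm_num
  · simp

lemma Ppoly_coeff_nonneg (k : ℕ) :
    ∀ (S : Finset (Fin R)) (n : Fin R) (d : PairIdx R →₀ ℕ),
      0 ≤ (Ppoly R k S n).coeff d := by
  induction k using Nat.strong_induction_on with
  | _ k ih =>
    match k with
    | 0 =>
      intro S n d
      rw [Ppoly, MvPolynomial.coeff_one]
      split_ifs <;> norm_num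
    | (k + 1) =>
      intro S n d
      rw [Ppoly, MvPolynomial.coeff_sum]
      refine Finset.sum_nonneg fun t _ => ?_
      rw [MvPolynomial.coeff_mul]
      refine Finset.sum_nonneg fun pq _ => ?_
      refine mul_nonneg (ih t.1 (Finset.mem_range.mp t.2) S n pq.1) ?_
      rw [MvPolynomial.coeff_sum]
      refine Finset.sum_nonneg fun m _ => ?_
      rw [MvPolynomial.coeff_mul]
      refine Finset.sum_nonneg fun ab _ => ?_
      exact mul_nonneg (eVar_coeff_nonneg n m ab.1)
        (ih (k - t.1) (Nat.lt_succ_of_le (Nat.sub_le k t.1)) (S.erase n) m ab.2)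

lemma eVar_eval (x c : Fin R → ℝ) {n m : Fin R} (h : n ≠ m) :
    MvPolynomial.eval (fun p : PairIdx R => (Bmat x c p.1.1 p.1.2) ^ 2) (eVar R n m)
      = (Bmat x c m n) ^ 2 := by
  unfold eVar
  rcases lt_or_gt_of_ne h with hlt | hgt
  · rw [dif_pos hlt, MvPolynomial.eval_X]
    show (Bmat x c n m) ^ 2 = (Bmat x c m n) ^ 2
    rw [Bmat_skew x c m n]
    ring
  · rw [dif_neg (not_lt_of_gt hgt), dif_pos hgt, MvPolynomial.eval_X]

lemma sum_even_range (g : ℕ → ℝ) (hodd : ∀ t, Odd t → g t = 0) (k : ℕ) :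
    ∑ t ∈ Finset.range (2 * k + 1), g t = ∑ s ∈ Finset.range (k + 1), g (2 * s) := by
  induction k with
  | zero => simp
  | succ k ihk =>
    have h1 : 2 * (k + 1) + 1 = (2 * k + 1) + 1 + 1 := by ring
    rw [h1, Finset.sum_range_succ, Finset.sum_range_succ, ihk]
    rw [hodd (2 * k + 1) ⟨k, by ring⟩, add_zero]
    rw [show 2 * k + 1 + 1 = 2 * (k + 1) by ring,
      Finset.sum_range_succ (fun s => g (2 * s)) (k + 1)]

/-- The main evaluation lemma. -/
lemma ppoly_eval (x c : Fin R → ℝ) (hx : Function.Injective x) (k : ℕ) :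
    ∀ (S : Finset (Fin R)) (n : Fin R), n ∈ S →
      ((Bres x c S) ^ (2 * k)) n n
        = (-1 : ℝ) ^ k * MvPolynomial.eval
            (fun p : PairIdx R => (Bmat x c p.1.1 p.1.2) ^ 2) (Ppoly R k S n) := by
  induction k using Nat.strong_induction_on with
  | _ k ih =>
    match k with
    | 0 =>
      intro S n hn
      rw [Ppoly]
      norm_num [Matrix.one_apply_eq]
    | (k + 1) =>
      intro S n hn
      set E : PairIdx R → ℝ := fun p => (Bmat x c p.1.1 p.1.2) ^ 2 with hE
      have h2 : 2 * (k + 1) = 2 * k + 2 := by ring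
      rw [h2]
      have hfr := frec x c S n (2 * k)
      unfold fdiag at hfr
      rw [hfr]
      have hodd : ∀ t, Odd t → ((Bres x c S) ^ t) n n * hval x c S n (2 * k - t) = 0 := by
        intro t ht
        rw [diag_pow_odd (Bres_skew x c S) ht n, zero_mul]
      rw [sum_even_range (fun t => ((Bres x c S) ^ t) n n * hval x c S n (2 * k - t))
        hodd k]
      have hterm : ∀ s ∈ Finset.range (k + 1),
          ((Bres x c S) ^ (2 * s)) n n * hval x c S n (2 * k - 2 * s)
            = (-1 : ℝ) ^ (k + 1) * (MvPolynomial.eval E (Ppoly R s S n)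
              * ∑ m ∈ S.erase n, (Bmat x c m n) ^ 2
                * MvPolynomial.eval E (Ppoly R (k - s) (S.erase n) m)) := by
        intro s hs
        have hsk : s < k + 1 := Finset.mem_range.mp hs
        have hrw : 2 * k - 2 * s = 2 * (k - s) := by omega
        rw [hrw, hval_even x c S n hx hn (k - s)]
        rw [ih s hsk S n hn]
        have hsum : (∑ m ∈ S.erase n,
            (Bmat x c m n) ^ 2 * ((Bres x c (S.erase n)) ^ (2 * (k - s))) m m)
            = (-1 : ℝ) ^ (k - s) * ∑ m ∈ S.erase n, (Bmat x c m n) ^ 2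
                * MvPolynomial.eval E (Ppoly R (k - s) (S.erase n) m) := by
          rw [Finset.mul_sum]
          refine Finset.sum_congr rfl fun m hm => ?_
          rw [ih (k - s) (Nat.lt_succ_of_le (Nat.sub_le k s)) (S.erase n) m hm]
          ring
        rw [hsum]
        have hpow : (-1 : ℝ) ^ s * (-1 : ℝ) ^ (k - s) = (-1 : ℝ) ^ k := by
          rw [← pow_add]
          congr 1
          omega
        have : (-1 : ℝ) ^ k * (-1 : ℝ) = (-1 : ℝ) ^ (k + 1) := by
          rw [pow_succ]
        calc (-1 : ℝ) ^ s * MvPolynomial.eval E (Ppoly R s S n)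
              * -((-1 : ℝ) ^ (k - s) * ∑ m ∈ S.erase n, (Bmat x c m n) ^ 2
                * MvPolynomial.eval E (Ppoly R (k - s) (S.erase n) m))
            = ((-1 : ℝ) ^ s * (-1 : ℝ) ^ (k - s)) * (-1)
              * (MvPolynomial.eval E (Ppoly R s S n)
                * ∑ m ∈ S.erase n, (Bmat x c m n) ^ 2
                  * MvPolynomial.eval E (Ppoly R (k - s) (S.erase n) m)) := by ring
          _ = (-1 : ℝ) ^ (k + 1) * (MvPolynomial.eval E (Ppoly R s S n)
                * ∑ m ∈ S.erase n, (Bmat x c m n) ^ 2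
                  * MvPolynomial.eval E (Ppoly R (k - s) (S.erase n) m)) := by
              rw [hpow, this]
      rw [Finset.sum_congr rfl hterm]
      rw [← Finset.mul_sum]
      congr 1
      rw [Ppoly]
      rw [map_sum (MvPolynomial.eval E)]
      rw [Finset.sum_attach (Finset.range (k + 1))
        (fun t => MvPolynomial.eval E (Ppoly R t S n
          * ∑ m ∈ S.erase n, eVar R n m * Ppoly R (k - t) (S.erase n) m))]
      refine Finset.sum_congr rfl fun s _ => ?_
      rw [map_mul]
      congr 1
      rw [map_sum (MvPolynomial.eval E)]
      refine Finset.sum_congr rfl fun m hm => ?_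
      rw [map_mul]
      congr 1
      rw [hE]
      exact (eVar_eval x c (Ne.symm (Finset.mem_erase.mp hm).1)).symm

lemma Bres_univ (x c : Fin R → ℝ) : Bres x c Finset.univ = Bmat x c := by
  ext i j
  rw [Bres_apply, if_pos ⟨Finset.mem_univ i, Finset.mem_univ j⟩]

end HilbAux

/-- `(-1)^k (B^{2k})_{n,n}` is a polynomial with nonnegative coefficients in the
variables `b_{l,m}²` (indexed by unordered pairs `l < m`), and `(B^j)_{n,n} = 0`
for every odd positive integer `j`. -/
theorem diag_even_power_polynomial (R k : ℕ) (hR : 1 ≤ R) (hk : 1 ≤ k)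
    (n : Fin R) :
    (∃ P : MvPolynomial {p : Fin R × Fin R // p.1 < p.2} ℝ,
      (∀ d, 0 ≤ P.coeff d) ∧
      (∀ x c : Fin R → ℝ, Function.Injective x →
        (-1 : ℝ) ^ k * ((Bmat x c) ^ (2 * k)) n n =
          MvPolynomial.eval (fun p => (Bmat x c p.1.1 p.1.2) ^ 2) P)) ∧
    (∀ x c : Fin R → ℝ, Function.Injective x →
      ∀ j : ℕ, Odd j → 0 < j → ((Bmat x c) ^ j) n n = 0) := by
  constructor
  · refine ⟨HilbAux.Ppoly R k Finset.univ n, ?_, ?_⟩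
    · exact fun d => HilbAux.Ppoly_coeff_nonneg k Finset.univ n d
    · intro x c hx
      have h := HilbAux.ppoly_eval x c hx k Finset.univ n (Finset.mem_univ n)
      rw [HilbAux.Bres_univ] at h
      rw [h, ← mul_assoc]
      have hone : (-1 : ℝ) ^ k * (-1 : ℝ) ^ k = 1 := by
        rw [← pow_add, ← two_mul, pow_mul]
        norm_num
      rw [hone, one_mul]
  · intro x c hx j hj hjpos
    exact HilbAux.diag_pow_odd (HilbAux.Bmat_skew x c) hj n
end

section
/- Let l ≥ 3 be an integer and let x_1,…,x_l be distinct real numbers, with a_{i,j} = 1/(x_i − x_j) for i ≠ j. Then Σ_{σ ∈ S_l} a_{σ(1),σ(2)} · a_{σ(2),σ(3)} ⋯ a_{σ(l−1),σ(l)} · a_{σ(l),σ(1)} = 0, where S_l denotes the set of permutations of {1,…,l}. -/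
/-! Cut a vertex `p` out of the cycle. With `q`, `r` its neighbours, the partial-fraction
identity `a_qp a_pr = a_qr (a_qp + a_pr)` turns each cyclic product into `Q σ (a_qp + a_pr)`,
where `Q σ` is the product along the shortened cycle `κ`. Since `Q (σ κ) = Q σ` and `κ q = r`,
reindexing by `σ ↦ σ κ` turns the terms with `a_qp` into terms with `a_rp = -a_pr`, and
everything cancels. -/

open Equiv Finset

theorem one_div_sub_mul_one_div_sub {K : Type*} [Field K] {a b c : K} (hab : a ≠ b)
    (hbc : b ≠ c) (hac : a ≠ c) :
    1 / (a - b) * (1 / (b - c)) = 1 / (a - c) * (1 / (a - b) + 1 / (b - c)) := by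
  have := sub_ne_zero.2 hab
  have := sub_ne_zero.2 hbc
  have := sub_ne_zero.2 hac
  field_simp
  ring

namespace Equiv.Perm

variable {ι : Type*} [DecidableEq ι] (c : Perm ι) (p : ι)

def bypass : Perm ι := c * swap p (c⁻¹ p)

@[simp] theorem bypass_apply_self : c.bypass p p = p := by
  simp [bypass]

@[simp] theorem bypass_apply_inv_self : c.bypass p (c⁻¹ p) = c p := by
  simp [bypass]

theorem bypass_apply_of_ne {i : ι} (hp : i ≠ p) (hq : i ≠ c⁻¹ p) : c.bypass p i = c i := by
  rw [bypass, mul_apply, swap_apply_of_ne_of_ne hp hq]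

end Equiv.Perm

section
variable {ι R : Type*} [Fintype ι] [DecidableEq ι] [CommRing R] {a : ι → ι → R}

theorem prod_cycle_eq_prod_bypass_mul
    (hpf : ∀ u v w, u ≠ v → v ≠ w → u ≠ w → a u v * a v w = a u w * (a u v + a v w))
    {c : Perm ι} {p : ι} (hqp : c⁻¹ p ≠ p) (hpr : p ≠ c p) (hqr : c⁻¹ p ≠ c p) (σ : Perm ι) :
    ∏ i, a (σ i) (σ (c i)) =
      (∏ i ∈ univ.erase p, a (σ i) (σ (c.bypass p i))) *
        (a (σ (c⁻¹ p)) (σ p) + a (σ p) (σ (c p))) := by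
  set q := c⁻¹ p
  have hq : q ∈ univ.erase p := mem_erase.2 ⟨hqp, mem_univ _⟩
  have hcq : c q = p := by simp [q]
  have hrest : ∏ i ∈ (univ.erase p).erase q, a (σ i) (σ (c.bypass p i)) =
      ∏ i ∈ (univ.erase p).erase q, a (σ i) (σ (c i)) := by
    refine prod_congr rfl fun i hi => ?_
    obtain ⟨hiq, hip, -⟩ := by simpa only [mem_erase] using hi
    rw [c.bypass_apply_of_ne p hip hiq]
  rw [← mul_prod_erase univ _ (mem_univ p), ← mul_prod_erase _ _ hq,
    ← mul_prod_erase _ _ hq, hrest, c.bypass_apply_inv_self, hcq]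
  linear_combination (∏ i ∈ (univ.erase p).erase q, a (σ i) (σ (c i))) *
    hpf _ _ _ (σ.injective.ne hqp) (σ.injective.ne hpr) (σ.injective.ne hqr)

theorem sum_perm_prod_cycle_eq_zero (hanti : ∀ i j, i ≠ j → a j i = -a i j)
    (hpf : ∀ u v w, u ≠ v → v ≠ w → u ≠ w → a u v * a v w = a u w * (a u v + a v w))
    {c : Perm ι} {p : ι} (h1 : c p ≠ p) (h2 : c (c p) ≠ p) :
    ∑ σ : Perm ι, ∏ i, a (σ i) (σ (c i)) = 0 := by
  have hqp : c⁻¹ p ≠ p := fun h => h1 (by simpa using congrArg c h.symm)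
  have hqr : c⁻¹ p ≠ c p := fun h => h2 (by simp [← h])
  set κ := c.bypass p
  set Q : Perm ι → R := fun σ => ∏ i ∈ univ.erase p, a (σ i) (σ (κ i))
  have hQ (σ : Perm ι) : Q (σ * κ) = Q σ :=
    κ.prod_comp (univ.erase p) (fun j => a (σ j) (σ (κ j))) fun i hi => by
      simpa [κ] using fun h : i = p => hi (h ▸ c.bypass_apply_self p)
  have shift : ∑ σ : Perm ι, Q σ * a (σ (c⁻¹ p)) (σ p) =
      ∑ σ : Perm ι, Q σ * a (σ (c p)) (σ p) := by
    rw [← Equiv.sum_comp (Equiv.mulRight κ)]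
    simp only [coe_mulRight, hQ, Perm.mul_apply, κ, Perm.bypass_apply_inv_self,
      Perm.bypass_apply_self]
  calc ∑ σ : Perm ι, ∏ i, a (σ i) (σ (c i))
      = ∑ σ : Perm ι, (Q σ * a (σ (c⁻¹ p)) (σ p) + Q σ * a (σ p) (σ (c p))) :=
        sum_congr rfl fun σ _ => by
          rw [prod_cycle_eq_prod_bypass_mul hpf hqp h1.symm hqr, mul_add]
    _ = ∑ σ : Perm ι, (Q σ * a (σ (c p)) (σ p) + Q σ * a (σ p) (σ (c p))) := by
        rw [sum_add_distrib, sum_add_distrib, shift]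
    _ = 0 := sum_eq_zero fun σ _ => by
        rw [hanti _ _ (σ.injective.ne h1.symm)]
        ring

end

/-- For `l ≥ 3` and distinct reals `x_1,…,x_l`, with `a_{i,j} = 1/(x_i - x_j)`,
the sum over all permutations `σ` of the cyclic product
`a_{σ(1),σ(2)} a_{σ(2),σ(3)} ⋯ a_{σ(l-1),σ(l)} a_{σ(l),σ(1)}` vanishes.
Here `finRotate l` sends `i` to `i+1` cyclically, so the product below is
exactly the cyclic product above. -/
theorem sum_cyclic_products_eq_zero (l : ℕ) (hl : 3 ≤ l) (x : Fin l → ℝ)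
    (hx : Function.Injective x) :
    ∑ σ : Equiv.Perm (Fin l), ∏ i : Fin l,
      (1 / (x (σ i) - x (σ (finRotate l i)))) = 0 := by
  obtain ⟨m, rfl⟩ : ∃ m, l = m + 3 := ⟨l - 3, by omega⟩
  refine sum_perm_prod_cycle_eq_zero
    (a := fun i j => 1 / (x i - x j)) (p := 0)
    (fun i j _ => by rw [← neg_sub, one_div_neg_eq_neg_one_div])
    (fun u v w huv hvw huw => one_div_sub_mul_one_div_sub (hx.ne huv) (hx.ne hvw) (hx.ne huw))
    ?_ ?_
  · simp [finRotate_apply]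
  · simp [finRotate_apply, Fin.ext_iff, Fin.val_add, Nat.mod_eq_of_lt (show 2 < m + 3 by omega)]
end

section
/- Let x = (x_1,…,x_R) be a vector of distinct real numbers and A = A(x). Let u ∈ ℂ^R be an eigenvector of A with eigenvalue iμ, μ ∈ ℝ (i.e. Au = iμu, u ≠ 0). Then for every 1 ≤ n ≤ R: μ²|u_n|² = Σ_{m ≠ n} a_{m,n}² · (|u_m|² + 2·Re(u_n · conj(u_m))). -/
/-!
Multiplying the `n`-th coordinates of `A u = iμ u` and of its conjugate `A ū = -iμ ū` gives
`μ² |u_n|² = ∑_{m, m' ≠ n} a_{nm} a_{nm'} u_m ū_{m'}`. For `m ≠ m'` the partial-fraction identity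
`a_{nm} a_{nm'} = a_{mm'} (a_{nm} - a_{nm'})` splits the off-diagonal part into two double sums,
and the eigenvalue equations collapse each of them again, up to boundary terms `a_{nm}²` coming
from the missing index `n`. Only antisymmetry, the zero diagonal and the cyclic identity
`a_{ij} a_{jk} + a_{jk} a_{ki} + a_{ki} a_{ij} = 0` enter, so the identity holds for any such
matrix over a commutative ring and any two eigenvectors with opposite eigenvalues.
-/

open Matrix

/-- The generalized Hilbert matrix `A(x)` with entries `a_{m,n} = 1/(x_m - x_n)`
for `m ≠ n` and `0` on the diagonal. -/
noncomputable def Amat {R : ℕ} (x : Fin R → ℝ) : Matrix (Fin R) (Fin R) ℝ :=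
  Matrix.of fun m n => if m = n then 0 else 1 / (x m - x n)

open Finset

namespace Matrix

variable {ι α : Type*}

theorem map_ofReal_mulVec_conj [Fintype ι] {A : Matrix ι ι ℝ} {c : ℂ} {u : ι → ℂ}
    (h : A.map ((↑) : ℝ → ℂ) *ᵥ u = c • u) :
    A.map ((↑) : ℝ → ℂ) *ᵥ (starRingEnd ℂ ∘ u) = starRingEnd ℂ c • (starRingEnd ℂ ∘ u) := by
  ext i
  have hi := congrArg (starRingEnd ℂ) (congrFun h i)
  rw [RingHom.map_mulVec, Matrix.map_map] at hi
  simpa [Function.comp_def] using hi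

variable [DecidableEq ι] [CommRing α] {b : Matrix ι ι α}

theorem sum_erase_mul_of_mulVec_eq_smul [Fintype ι] {c : α} {u : ι → α} (hu : b *ᵥ u = c • u)
    (i k : ι) : ∑ m ∈ univ.erase k, b i m * u m = c * u i - b i k * u k := by
  rw [sum_erase_eq_sub (mem_univ k)]
  simpa [mulVec, dotProduct] using congrFun hu i

theorem mul_eq_ite_add_of_cyclic (hanti : ∀ i j, b j i = -b i j)
    (hcyc : ∀ i j k, i ≠ j → j ≠ k → k ≠ i → b i j * b j k + b j k * b k i + b k i * b i j = 0)
    {n m m' : ι} (hm : m ≠ n) (hm' : m' ≠ n) :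
    b n m * b n m' = (if m = m' then b n m ^ 2 else 0) + b m m' * (b n m - b n m') := by
  split_ifs with h
  · subst h
    ring
  · have hmnm' := hcyc m n m' hm hm'.symm (Ne.symm h)
    rw [hanti n m, hanti m m'] at hmnm'
    linear_combination -hmnm'

variable [Fintype ι]

theorem neg_sq_mul_eq_sum_of_cyclic (hanti : ∀ i j, b j i = -b i j) (hdiag : ∀ i, b i i = 0)
    (hcyc : ∀ i j k, i ≠ j → j ≠ k → k ≠ i → b i j * b j k + b j k * b k i + b k i * b i j = 0)
    {c : α} {u v : ι → α} (hu : b *ᵥ u = c • u) (hv : b *ᵥ v = (-c) • v) (n : ι) :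
    -c ^ 2 * (u n * v n) =
      ∑ m ∈ univ.erase n, b n m ^ 2 * (u m * v m + (u m * v n + u n * v m)) := by
  set S := univ.erase n
  have hrow_u : ∀ k, ∑ m ∈ S, b k m * u m = c * u k - b k n * u n :=
    fun k => sum_erase_mul_of_mulVec_eq_smul hu k n
  have hrow_v : ∀ k, ∑ m ∈ S, b k m * v m = -c * v k - b k n * v n :=
    fun k => sum_erase_mul_of_mulVec_eq_smul hv k n
  have hcol_u : ∀ k, ∑ m ∈ S, b m k * u m = -(c * u k) - b n k * u n := by
    intro k
    have hneg : ∑ m ∈ S, b m k * u m = -∑ m ∈ S, b k m * u m := by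
      rw [← sum_neg_distrib]
      exact sum_congr rfl fun m _ => by rw [hanti k m, neg_mul]
    rw [hneg, hrow_u, hanti k n]
    ring
  calc -c ^ 2 * (u n * v n)
      = (∑ m ∈ S, b n m * u m) * ∑ m' ∈ S, b n m' * v m' := by
        rw [hrow_u, hrow_v, hdiag]
        ring
    _ = ∑ m ∈ S, ∑ m' ∈ S, b n m * b n m' * (u m * v m') := by
        rw [sum_mul_sum]
        exact sum_congr rfl fun _ _ => sum_congr rfl fun _ _ => by ring
    _ = ∑ m ∈ S, ∑ m' ∈ S, ((if m = m' then b n m ^ 2 * (u m * v m') else 0)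
          + b n m * u m * (b m m' * v m') - b n m' * v m' * (b m m' * u m)) := by
        refine sum_congr rfl fun m hm => sum_congr rfl fun m' hm' => ?_
        rw [mul_eq_ite_add_of_cyclic hanti hcyc (ne_of_mem_erase hm) (ne_of_mem_erase hm')]
        split_ifs <;> ring
    _ = ∑ m ∈ S, b n m ^ 2 * (u m * v m)
          + (∑ m ∈ S, b n m * u m * ∑ m' ∈ S, b m m' * v m'
            - ∑ m' ∈ S, b n m' * v m' * ∑ m ∈ S, b m m' * u m) := by
        simp only [sum_sub_distrib, sum_add_distrib, ← mul_sum]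
        rw [sum_comm (s := S) (f := fun m m' => b n m' * v m' * (b m m' * u m))]
        simp only [← mul_sum, add_sub_assoc]
        congr 1
        exact sum_congr rfl fun m hm => by rw [sum_ite_eq, if_pos hm]
    _ = ∑ m ∈ S, b n m ^ 2 * (u m * v m + (u m * v n + u n * v m)) := by
        simp only [hrow_v, hcol_u, ← sum_sub_distrib, ← sum_add_distrib]
        exact sum_congr rfl fun m _ => by rw [hanti n m]; ring

end Matrix

section Amat

variable {R : ℕ} (x : Fin R → ℝ)

theorem Amat_apply_self (i : Fin R) : Amat x i i = 0 := by
  simp [Amat]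

theorem Amat_apply_of_ne {i j : Fin R} (h : i ≠ j) : Amat x i j = 1 / (x i - x j) := by
  simp [Amat, h]

theorem Amat_apply_swap (i j : Fin R) : Amat x j i = -Amat x i j := by
  obtain rfl | h := eq_or_ne i j
  · simp [Amat_apply_self]
  · rw [Amat_apply_of_ne x h, Amat_apply_of_ne x h.symm, ← neg_sub, div_neg]

variable {x}

theorem Amat_cyclic (hx : Function.Injective x) {i j k : Fin R}
    (hij : i ≠ j) (hjk : j ≠ k) (hki : k ≠ i) :
    Amat x i j * Amat x j k + Amat x j k * Amat x k i + Amat x k i * Amat x i j = 0 := by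
  have h₁ : x i - x j ≠ 0 := sub_ne_zero.2 (hx.ne hij)
  have h₂ : x j - x k ≠ 0 := sub_ne_zero.2 (hx.ne hjk)
  have h₃ : x k - x i ≠ 0 := sub_ne_zero.2 (hx.ne hki)
  rw [Amat_apply_of_ne x hij, Amat_apply_of_ne x hjk, Amat_apply_of_ne x hki]
  field_simp
  ring

end Amat

theorem eigenvector_identity_A_general {R : ℕ} (x : Fin R → ℝ)
    (hx : Function.Injective x) (μ : ℝ) (u : Fin R → ℂ)
    (h : ((Amat x).map (fun r => (r : ℂ))) *ᵥ u = (Complex.I * (μ : ℂ)) • u)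
    (n : Fin R) :
    μ ^ 2 * ‖u n‖ ^ 2 =
      ∑ m ∈ Finset.univ.erase n,
        (1 / (x m - x n)) ^ 2 *
          (‖u m‖ ^ 2 + 2 * (u n * (starRingEnd ℂ) (u m)).re) := by
  have hconj := map_ofReal_mulVec_conj h
  rw [map_mul, Complex.conj_I, Complex.conj_ofReal, neg_mul] at hconj
  have key := neg_sq_mul_eq_sum_of_cyclic (b := (Amat x).map (fun r => (r : ℂ)))
    (fun i j => by simp [Amat_apply_swap x i j]) (fun i => by simp [Amat_apply_self])
    (fun i j k hij hjk hki => by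
      simp only [Matrix.map_apply]
      exact_mod_cast Amat_cyclic hx hij hjk hki)
    h hconj n
  apply Complex.ofReal_injective
  push_cast
  convert key using 1
  · rw [Function.comp_apply, Complex.mul_conj', mul_pow, Complex.I_sq]
    ring
  · refine sum_congr rfl fun m hm => ?_
    simp only [Function.comp_apply, Matrix.map_apply, Amat_apply_swap x m n,
      Amat_apply_of_ne x (ne_of_mem_erase hm), Complex.re_eq_add_conj, map_mul,
      Complex.conj_conj, Complex.mul_conj']
    push_cast
    ring

/-- If `u` is an eigenvector of `A(x)` for the eigenvalue `iμ`, then for every `n`,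
`μ² |u_n|² = Σ_{m ≠ n} a_{m,n}² (|u_m|² + 2 Re(u_n conj(u_m)))`. -/
theorem eigenvector_identity_A {R : ℕ} (x : Fin R → ℝ)
    (hx : Function.Injective x) (μ : ℝ) (u : Fin R → ℂ) (hu : u ≠ 0)
    (h : ((Amat x).map (fun r => (r : ℂ))) *ᵥ u = (Complex.I * (μ : ℂ)) • u)
    (n : Fin R) :
    μ ^ 2 * ‖u n‖ ^ 2 =
      ∑ m ∈ Finset.univ.erase n,
        (1 / (x m - x n)) ^ 2 *
          (‖u m‖ ^ 2 + 2 * (u n * (starRingEnd ℂ) (u m)).re) :=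
  eigenvector_identity_A_general x hx μ u h n
end

section
/- Let x = (x_1,…,x_R) be a vector of distinct real numbers, c = (c_1,…,c_R) a vector of real numbers and B = B(x,c). Let u ∈ ℂ^R be an eigenvector of B with eigenvalue iμ, μ ∈ ℝ (i.e. Bu = iμu, u ≠ 0). Then for every 1 ≤ n ≤ R: μ²|u_n|² = Σ_{m ≠ n} a_{m,n}² · (c_n² c_m² |u_m|² + 2 c_n³ c_m · Re(u_n · conj(u_m))), where a_{m,n} = 1/(x_m − x_n). -/
/-!
Write `B = C A C` with `C = diag c` and `A` the Cauchy matrix `a_{p,q} = (x_p - x_q)⁻¹`. With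
`w = c u`, the eigen equation reads `iμ u_n = c_n (A w)_n`, so `μ² |u_n|² = c_n² (A w)_n (A w̄)_n`.
Expanding this product, the partial fraction identity
`a_{n,m} a_{n,k} = a_{n,m} a_{m,k} + a_{n,k} a_{k,m}` (for distinct `m, k, n`) turns the
off-diagonal terms into `Σ_m a_{n,m} · 2 Re (w_m conj (A w)_m)` plus terms involving `w_n`.
But `w_m conj (A w)_m = u_m conj (iμ u_m)` is purely imaginary, so only the diagonal terms and
those involving `w_n` remain, and they give the right-hand side.
-/

open Matrix

open Function Complex

section Cauchy

variable {ι K : Type*} [Field K]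

/-- Off the diagonal this is the paper's `a_{p,q}`; on the diagonal it is `0⁻¹ = 0`. -/
def cauchyMatrix (x : ι → K) : Matrix ι ι K := of fun p q => (x p - x q)⁻¹

theorem cauchyMatrix_map {L : Type*} [Field L] (f : K →+* L) (x : ι → K) :
    (cauchyMatrix x).map f = cauchyMatrix (f ∘ x) := by
  ext p q
  simp [cauchyMatrix]

/-- Partial fractions `1 / ((r - p) (r - q)) = (1 / (r - p) - 1 / (r - q)) / (p - q)`; the
indicator terms correct the cases of coinciding indices, where `0⁻¹ = 0` intervenes. -/
theorem inv_sub_mul_inv_sub [DecidableEq ι] {x : ι → K} (hx : Injective x) (n m k : ι) :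
    (x n - x m)⁻¹ * (x n - x k)⁻¹ =
      (x n - x m)⁻¹ * (x m - x k)⁻¹ + (x n - x k)⁻¹ * (x k - x m)⁻¹ +
        (if m = k then (x n - x m)⁻¹ ^ 2 else 0) + (if k = n then (x n - x m)⁻¹ ^ 2 else 0) +
        (if m = n then (x n - x k)⁻¹ ^ 2 else 0) := by
  have hsub : ∀ {p q}, p ≠ q → x p - x q ≠ 0 := fun hpq => sub_ne_zero.2 (hx.ne hpq)
  by_cases hmk : m = k
  · subst hmk
    by_cases hmn : m = n <;> simp [hmn, sq]
  by_cases hkn : k = n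
  · subst hkn
    simp only [hmk, sub_self, _root_.inv_zero, if_true, if_false]
    rw [← neg_sub (x k) (x m), inv_neg]
    ring
  by_cases hmn : m = n
  · subst hmn
    simp only [hmk, hkn, sub_self, _root_.inv_zero, if_true, if_false]
    rw [← neg_sub (x m) (x k), inv_neg]
    ring
  simp only [hmk, hkn, hmn, if_false, add_zero]
  have := hsub hmk
  have := hsub (Ne.symm hmk)
  have := hsub (Ne.symm hmn)
  have := hsub (Ne.symm hkn)
  field_simp
  ring

theorem cauchyMatrix_mulVec_mul_mulVec [Fintype ι] [DecidableEq ι] {x : ι → K}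
    (hx : Injective x) (w z : ι → K) (n : ι) :
    (cauchyMatrix x *ᵥ w) n * (cauchyMatrix x *ᵥ z) n =
      ∑ m, (x n - x m)⁻¹ ^ 2 * (w m * z m + w m * z n + w n * z m) +
        ∑ m, (x n - x m)⁻¹ * (w m * (cauchyMatrix x *ᵥ z) m + z m * (cauchyMatrix x *ᵥ w) m) := by
  simp only [mulVec, dotProduct, cauchyMatrix, of_apply, Finset.sum_mul_sum]
  simp_rw [mul_mul_mul_comm _ (w _), inv_sub_mul_inv_sub hx n, add_mul, ite_mul, zero_mul,
    Finset.sum_add_distrib, Finset.sum_ite_eq, Finset.sum_ite_eq', Finset.mem_univ, if_true]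
  simp only [Finset.sum_ite_irrel, Finset.sum_const_zero, Finset.sum_ite_eq', Finset.mem_univ,
    if_true, Finset.mul_sum, mul_add, Finset.sum_add_distrib]
  rw [Finset.sum_comm (f := fun m k => (x n - x k)⁻¹ * (x k - x m)⁻¹ * (w m * z k))]
  simp only [mul_comm, mul_left_comm, mul_assoc]
  ring

end Cauchy

theorem star_cauchyMatrix_ofReal_mulVec {ι : Type*} [Fintype ι] (x : ι → ℝ) (v : ι → ℂ) :
    star (cauchyMatrix (fun p => (x p : ℂ)) *ᵥ v) =
      cauchyMatrix (fun p => (x p : ℂ)) *ᵥ star v := by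
  ext p
  simp [mulVec, dotProduct, cauchyMatrix, star_sum]

theorem Bmat_eq_diagonal_mul_cauchyMatrix_mul_diagonal {R : ℕ} (x c : Fin R → ℝ) :
    Bmat x c = diagonal c * cauchyMatrix x * diagonal c := by
  ext p q
  by_cases hpq : p = q
  · simp [Bmat, cauchyMatrix, hpq]
  · simp [Bmat, cauchyMatrix, hpq, div_eq_mul_inv, mul_right_comm]

theorem eigenvector_identity_B_general {R : ℕ} (x c : Fin R → ℝ)
    (hx : Function.Injective x) (μ : ℝ) (u : Fin R → ℂ)
    (h : ((Bmat x c).map (fun r => (r : ℂ))) *ᵥ u = (Complex.I * (μ : ℂ)) • u)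
    (n : Fin R) :
    μ ^ 2 * ‖u n‖ ^ 2 =
      ∑ m ∈ Finset.univ.erase n,
        (1 / (x m - x n)) ^ 2 *
          (c n ^ 2 * c m ^ 2 * ‖u m‖ ^ 2 +
            2 * c n ^ 3 * c m * (u n * (starRingEnd ℂ) (u m)).re) := by
  set A := cauchyMatrix fun p => (x p : ℂ) with hA
  set w : Fin R → ℂ := fun m => c m * u m
  have heig : ∀ p, (c p : ℂ) * (A *ᵥ w) p = I * μ * u p := by
    have hB : (Bmat x c).map (fun r => (r : ℂ)) =
        diagonal (fun p => (c p : ℂ)) * A * diagonal (fun p => (c p : ℂ)) := by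
      change (Bmat x c).map ofRealHom = _
      rw [Bmat_eq_diagonal_mul_cauchyMatrix_mul_diagonal, Matrix.map_mul, Matrix.map_mul,
        diagonal_map (map_zero _), cauchyMatrix_map]
      rfl
    have hw : diagonal (fun p => (c p : ℂ)) *ᵥ u = w := funext (mulVec_diagonal _ _)
    rw [hB, ← mulVec_mulVec, ← mulVec_mulVec, hw] at h
    intro p
    simpa [mulVec_diagonal, mul_assoc] using congrFun h p
  have hcross : ∀ m, w m * (A *ᵥ star w) m + star w m * (A *ᵥ w) m = 0 := fun m =>
    calc w m * (A *ᵥ star w) m + star w m * (A *ᵥ w) m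
        = u m * star ((c m : ℂ) * (A *ᵥ w) m) + star (u m) * ((c m : ℂ) * (A *ᵥ w) m) := by
          rw [← star_cauchyMatrix_ofReal_mulVec]
          simp [w, star_mul']
          ring
      _ = 0 := by
          rw [heig]
          simp [star_mul']
          ring
  have hnorm : ((μ ^ 2 * ‖u n‖ ^ 2 : ℝ) : ℂ) = c n ^ 2 * ((A *ᵥ w) n * (A *ᵥ star w) n) :=
    calc ((μ ^ 2 * ‖u n‖ ^ 2 : ℝ) : ℂ) = (I * μ * u n) * star (I * μ * u n) := by
          rw [star_def, mul_conj', norm_mul, norm_mul, norm_I, norm_real, Real.norm_eq_abs,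
            one_mul, ← ofReal_pow, mul_pow, sq_abs]
      _ = c n ^ 2 * ((A *ᵥ w) n * (A *ᵥ star w) n) := by
          rw [← heig, ← star_cauchyMatrix_ofReal_mulVec]
          simp [star_mul']
          ring
  apply ofReal_injective
  rw [hnorm, cauchyMatrix_mulVec_mul_mulVec (x := fun p => (x p : ℂ)) (ofReal_injective.comp hx),
    ← hA]
  simp only [hcross, mul_zero, Finset.sum_const_zero, add_zero]
  push_cast
  rw [Finset.mul_sum, Finset.sum_erase _ (by simp)]
  refine Finset.sum_congr rfl fun m _ => ?_
  rw [← mul_conj', re_eq_add_conj, one_div, ← neg_sub, inv_neg]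
  simp [w, star_mul']
  ring

/-- If `u` is an eigenvector of `B(x,c)` for the eigenvalue `iμ`, then for every `n`,
`μ² |u_n|² = Σ_{m ≠ n} a_{m,n}² (c_n² c_m² |u_m|² + 2 c_n³ c_m Re(u_n conj(u_m)))`,
where `a_{m,n} = 1/(x_m - x_n)`. -/
theorem eigenvector_identity_B {R : ℕ} (x c : Fin R → ℝ)
    (hx : Function.Injective x) (μ : ℝ) (u : Fin R → ℂ) (hu : u ≠ 0)
    (h : ((Bmat x c).map (fun r => (r : ℂ))) *ᵥ u = (Complex.I * (μ : ℂ)) • u)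
    (n : Fin R) :
    μ ^ 2 * ‖u n‖ ^ 2 =
      ∑ m ∈ Finset.univ.erase n,
        (1 / (x m - x n)) ^ 2 *
          (c n ^ 2 * c m ^ 2 * ‖u m‖ ^ 2 +
            2 * c n ^ 3 * c m * (u n * (starRingEnd ℂ) (u m)).re) :=
  eigenvector_identity_B_general x c hx μ u h n
end

section
/- Let x = (x_1,…,x_R) be a vector of distinct real numbers, c = (c_1,…,c_R) a vector of real numbers, B = B(x,c), and let u = v + iw ∈ ℂ^R (v, w real vectors) be an eigenvector of B with eigenvalue iμ, μ ∈ ℝ. Then for every 1 ≤ n ≤ R: μ² v_n² = Σ_{m} b_{n,m}² w_m² + 2 c_n² Σ_{m ≠ n} a_{n,m} · w_m · (μ v_m − b_{m,n} w_n), where a_{n,m} = 1/(x_n − x_m). -/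
open Matrix

/-- Symmetrization trick for double sums. -/
lemma double_sum_sym {α : Type*} [DecidableEq α] (s : Finset α) (g h : α → α → ℝ)
    (hk : ∀ m ∈ s, ∀ k ∈ s, h m k + h k m = 2 * g m k - (if m = k then 2 * g m m else 0)) :
    ∑ m ∈ s, ∑ k ∈ s, g m k = (∑ m ∈ s, g m m) + ∑ m ∈ s, ∑ k ∈ s, h m k := by
  have e1 : ∑ m ∈ s, ∑ k ∈ s, (h m k + h k m)
      = (∑ m ∈ s, ∑ k ∈ s, h m k) + ∑ m ∈ s, ∑ k ∈ s, h m k := by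
    simp only [Finset.sum_add_distrib]
    congr 1
    exact Finset.sum_comm
  have e2 : ∑ m ∈ s, ∑ k ∈ s, (2 * g m k - (if m = k then 2 * g m m else 0))
      = 2 * (∑ m ∈ s, ∑ k ∈ s, g m k) - 2 * ∑ m ∈ s, g m m := by
    rw [Finset.mul_sum, Finset.mul_sum, ← Finset.sum_sub_distrib]
    refine Finset.sum_congr rfl fun m hm => ?_
    rw [Finset.sum_sub_distrib, Finset.mul_sum]
    congr 1
    rw [Finset.sum_ite_eq s m (fun _ => 2 * g m m)]
    simp [hm]
  have e3 : ∑ m ∈ s, ∑ k ∈ s, (h m k + h k m)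
      = ∑ m ∈ s, ∑ k ∈ s, (2 * g m k - (if m = k then 2 * g m m else 0)) :=
    Finset.sum_congr rfl fun m hm => Finset.sum_congr rfl fun k hkk => hk m hm k hkk
  rw [e1] at e3
  rw [e2] at e3
  linarith

/-- If `u = v + iw` is an eigenvector of `B(x,c)` for the eigenvalue `iμ`, then
for every `n`,
`μ² v_n² = Σ_m b_{n,m}² w_m² + 2 c_n² Σ_{m ≠ n} a_{n,m} w_m (μ v_m − b_{m,n} w_n)`,
where `a_{n,m} = 1/(x_n - x_m)`. -/
theorem eigenvector_real_part_identity {R : ℕ} (x c : Fin R → ℝ)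
    (hx : Function.Injective x) (μ : ℝ) (v w : Fin R → ℝ)
    (hu : (fun n => (v n : ℂ) + Complex.I * (w n : ℂ)) ≠ 0)
    (h : ((Bmat x c).map (fun r => (r : ℂ))) *ᵥ
          (fun n => (v n : ℂ) + Complex.I * (w n : ℂ)) =
        (Complex.I * (μ : ℂ)) • (fun n => (v n : ℂ) + Complex.I * (w n : ℂ)))
    (n : Fin R) :
    μ ^ 2 * v n ^ 2 =
      (∑ m, (Bmat x c n m) ^ 2 * w m ^ 2) +
        2 * c n ^ 2 * ∑ m ∈ Finset.univ.erase n,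
          (1 / (x n - x m)) * w m * (μ * v m - Bmat x c m n * w n) := by
  -- imaginary part of the eigenvalue equation
  have him : ∀ m : Fin R, ∑ k, Bmat x c m k * w k = μ * v m := by
    intro m
    have h1 := congrFun h m
    simp only [Matrix.mulVec, dotProduct, Matrix.map_apply, Pi.smul_apply,
      smul_eq_mul] at h1
    have h2 := congrArg Complex.im h1
    simp only [Complex.im_sum, Complex.add_im, Complex.mul_im, Complex.ofReal_re,
      Complex.ofReal_im, Complex.I_re, Complex.I_im, Complex.mul_re, Complex.add_re] at h2
    simpa using h2
  set B := Bmat x c with hB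
  have hBd : ∀ m, B m m = 0 := fun m => by simp [hB, Bmat]
  have hBoff : ∀ m k, m ≠ k → B m k = c m * c k / (x m - x k) := by
    intro m k hmk; simp [hB, Bmat, hmk]
  have hxne : ∀ m k : Fin R, m ≠ k → x m - x k ≠ 0 := by
    intro m k hmk
    exact sub_ne_zero_of_ne fun he => hmk (hx he)
  set s : Finset (Fin R) := Finset.univ.erase n with hs
  -- rewrite μ v n
  have h0 : μ ^ 2 * v n ^ 2 = (∑ k, B n k * w k) ^ 2 := by
    rw [him n]; ring
  -- inner sum rewrite
  have hinner : ∀ m, μ * v m - B m n * w n = ∑ k ∈ s, B m k * w k := by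
    intro m
    rw [← him m, ← Finset.sum_erase_add Finset.univ _ (Finset.mem_univ n)]
    ring
  rw [h0, sq, Finset.sum_mul_sum]
  -- restrict sums to s
  have houter : ∀ F : Fin R → ℝ, (hF : F n = 0) → (∑ m, F m) = ∑ m ∈ s, F m :=
    fun F hF => (Finset.sum_erase _ hF).symm
  rw [houter _ (by simp [hBd]), houter _ (by simp [hBd])]
  have hR2 : ∀ m ∈ s, (1 / (x n - x m)) * w m * (μ * v m - B m n * w n)
      = ∑ k ∈ s, (1 / (x n - x m)) * w m * (B m k * w k) := by
    intro m _
    rw [hinner m, Finset.mul_sum]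
  rw [Finset.sum_congr rfl hR2, Finset.mul_sum]
  have hR3 : ∀ m ∈ s, 2 * c n ^ 2 * ∑ k ∈ s, (1 / (x n - x m)) * w m * (B m k * w k)
      = ∑ k ∈ s, 2 * c n ^ 2 * ((1 / (x n - x m)) * w m * (B m k * w k)) := by
    intro m _; rw [Finset.mul_sum]
  rw [Finset.sum_congr rfl hR3]
  have hinner2 : ∀ m ∈ s, (∑ k, B n m * w m * (B n k * w k))
      = ∑ k ∈ s, B n m * w m * (B n k * w k) := by
    intro m _
    exact (Finset.sum_erase _ (by simp [hBd])).symm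
  rw [Finset.sum_congr rfl hinner2]
  -- apply the symmetrization lemma
  have key := double_sum_sym s (fun m k => B n m * w m * (B n k * w k))
    (fun m k => 2 * c n ^ 2 * ((1 / (x n - x m)) * w m * (B m k * w k))) ?_
  · rw [key]
    congr 1
    refine Finset.sum_congr rfl fun m _ => ?_
    ring
  · intro m hm k hk
    have hmn : m ≠ n := Finset.ne_of_mem_erase hm
    have hkn : k ≠ n := Finset.ne_of_mem_erase hk
    by_cases hmk : m = k
    · subst hmk
      simp [hBd]
    · simp only [if_neg hmk]
      rw [hBoff m k hmk, hBoff k m (Ne.symm hmk), hBoff n m (Ne.symm hmn),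
        hBoff n k (Ne.symm hkn)]
      have d1 := hxne n m (Ne.symm hmn)
      have d2 := hxne n k (Ne.symm hkn)
      have d3 := hxne m k hmk
      have d4 := hxne k m (Ne.symm hmk)
      field_simp
      ring
end

section
/- For every integer R ≥ 1, the spectral norm of the R×R Hilbert matrix T_R satisfies ‖T_R‖ < π. -/
/-- The `R × R` Hilbert matrix `T_R`, with entries `1/(m - n)` for `m ≠ n`
and `0` on the diagonal. -/
noncomputable def Tmat (R : ℕ) : Matrix (Fin R) (Fin R) ℝ :=
  Matrix.of fun m n => if m = n then 0 else 1 / ((m : ℝ) - (n : ℝ))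

/-- The spectral norm of a real matrix: the operator norm induced by the
Euclidean norm. -/
noncomputable def specNorm {R : ℕ} (M : Matrix (Fin R) (Fin R) ℝ) : ℝ :=
  ‖Matrix.toEuclideanCLM (𝕜 := ℝ) M‖

/-!
The sawtooth `θ ↦ π - θ` on `(0, 2π)` has Fourier coefficients `1 / (i k)` for `k ≠ 0`, so for
the trigonometric polynomials `f = ∑ x n e^{inθ}` and `g = ∑ y m e^{imθ}` the form
`∑_{m ≠ n} y m x n / (m - n)` equals `(1 / 2π) ∫₀^{2π} (π - θ) Im (g · conj f)`.
Since `|π - θ| < π` on the open interval, AM-GM and Parseval bound it strictly by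
`π (‖x‖² + ‖y‖²) / 2` unless `g` vanishes identically. Taking for `x` a vector of norm at most
one at which the operator norm of `T_R` is attained, and for `y` the normalised image `T_R x`,
gives `‖T_R‖ < π`.
-/

open Real intervalIntegral

theorem sin_int_mul_two_pi (k : ℤ) : sin (k * (2 * π)) = 0 := by
  simpa using sin_int_mul_two_pi_sub 0 k

theorem integral_cos_int_mul (k : ℤ) :
    ∫ θ in (0 : ℝ)..2 * π, cos (k * θ) = if k = 0 then 2 * π else 0 := by
  split_ifs with hk
  · simp [hk]
  · rw [integral_comp_mul_left (fun θ => cos θ) (Int.cast_ne_zero.mpr hk), integral_cos]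
    simp [sin_int_mul_two_pi]

theorem integral_pi_sub_mul_sin_int_mul (k : ℤ) :
    ∫ θ in (0 : ℝ)..2 * π, (π - θ) * sin (k * θ) = 2 * π / k := by
  rcases eq_or_ne k 0 with rfl | hk
  · simp
  have hk' : (k : ℝ) ≠ 0 := Int.cast_ne_zero.mpr hk
  have hderiv : ∀ θ, HasDerivAt (fun t => -((π - t) * cos (k * t) / k) - sin (k * t) / k ^ 2)
      ((π - θ) * sin (k * θ)) θ := by
    intro θ
    have h := ((((hasDerivAt_id θ).const_sub π).mul
      ((hasDerivAt_id θ).const_mul (k : ℝ)).cos).div_const k).neg.sub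
      (((hasDerivAt_id θ).const_mul (k : ℝ)).sin.div_const ((k : ℝ) ^ 2))
    exact h.congr_deriv (by simp only [id]; field_simp; ring)
  rw [integral_eq_sub_of_hasDerivAt (fun θ _ => hderiv θ)
    (Continuous.intervalIntegrable (by fun_prop) _ _)]
  simp only [sin_int_mul_two_pi, cos_int_mul_two_pi, mul_zero, sin_zero, cos_zero]
  field_simp
  ring

theorem two_mul_mul_sub_mul_le {r t : ℝ} (ht : |t| ≤ r) (a b c d : ℝ) :
    2 * t * (b * c - a * d) ≤ r * (a ^ 2 + b ^ 2 + c ^ 2 + d ^ 2) := by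
  rcases abs_le.mp ht with ⟨h₁, h₂⟩
  nlinarith [mul_nonneg (by linarith : 0 ≤ r + t) (add_nonneg (sq_nonneg (b - c)) (sq_nonneg (a + d))),
    mul_nonneg (by linarith : 0 ≤ r - t) (add_nonneg (sq_nonneg (b + c)) (sq_nonneg (a - d)))]

theorem two_mul_mul_sub_mul_lt {r t a b : ℝ} (ht : |t| < r) (hab : 0 < a ^ 2 + b ^ 2) (c d : ℝ) :
    2 * t * (b * c - a * d) < r * (a ^ 2 + b ^ 2 + c ^ 2 + d ^ 2) := by
  have hS : 0 < a ^ 2 + b ^ 2 + c ^ 2 + d ^ 2 := by positivity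
  rcases abs_lt.mp ht with ⟨h₁, h₂⟩
  rcases le_total 0 t with h | h
  · nlinarith [mul_nonneg h (add_nonneg (sq_nonneg (b - c)) (sq_nonneg (a + d))),
      mul_pos (by linarith : 0 < r - t) hS]
  · nlinarith [mul_nonneg (neg_nonneg.mpr h) (add_nonneg (sq_nonneg (b + c)) (sq_nonneg (a - d))),
      mul_pos (by linarith : 0 < r + t) hS]

theorem integral_sum_sum_mul {ι : Type*} [Fintype ι] {a b : ℝ} {f : ι → ι → ℝ → ℝ}
    (hf : ∀ m n, IntervalIntegrable (f m n) MeasureTheory.volume a b) (c : ι → ι → ℝ) :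
    ∫ θ in a..b, ∑ m, ∑ n, c m n * f m n θ = ∑ m, ∑ n, c m n * ∫ θ in a..b, f m n θ := by
  rw [integral_finsetSum fun m _ => ?_]
  · refine Finset.sum_congr rfl fun m _ => ?_
    rw [integral_finsetSum fun n _ => (hf m n).const_mul _]
    simp only [integral_const_mul]
  · simpa only [Finset.sum_fn] using IntervalIntegrable.sum _ fun n _ => (hf m n).const_mul (c m n)

section TrigonometricSums

variable {ι : Type*} [Fintype ι] (ν : ι → ℤ)

noncomputable def cosSum (c : ι → ℝ) (θ : ℝ) : ℝ := ∑ i, c i * cos (ν i * θ)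

noncomputable def sinSum (c : ι → ℝ) (θ : ℝ) : ℝ := ∑ i, c i * sin (ν i * θ)

/-- Terms with `ν m = ν n` vanish, since `1 / 0 = 0`. -/
noncomputable def hilbertForm (x y : ι → ℝ) : ℝ := ∑ m, ∑ n, y m * x n / (ν m - ν n)

@[fun_prop]
theorem continuous_cosSum (c : ι → ℝ) : Continuous (cosSum ν c) := by
  unfold cosSum; fun_prop

@[fun_prop]
theorem continuous_sinSum (c : ι → ℝ) : Continuous (sinSum ν c) := by
  unfold sinSum; fun_prop

theorem sinSum_mul_cosSum_sub_cosSum_mul_sinSum (x y : ι → ℝ) (θ : ℝ) :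
    sinSum ν y θ * cosSum ν x θ - cosSum ν y θ * sinSum ν x θ
      = ∑ m, ∑ n, y m * x n * sin ((ν m - ν n : ℤ) * θ) := by
  simp only [sinSum, cosSum, Finset.sum_mul_sum, ← Finset.sum_sub_distrib, Int.cast_sub, sub_mul,
    sin_sub]
  exact Finset.sum_congr rfl fun m _ => Finset.sum_congr rfl fun n _ => by ring

theorem cosSum_sq_add_sinSum_sq (c : ι → ℝ) (θ : ℝ) :
    cosSum ν c θ ^ 2 + sinSum ν c θ ^ 2 = ∑ m, ∑ n, c m * c n * cos ((ν m - ν n : ℤ) * θ) := by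
  simp only [sinSum, cosSum, sq, Finset.sum_mul_sum, ← Finset.sum_add_distrib, Int.cast_sub,
    sub_mul, cos_sub]
  exact Finset.sum_congr rfl fun m _ => Finset.sum_congr rfl fun n _ => by ring

theorem integral_pi_sub_mul_sinSum_mul_cosSum_sub (x y : ι → ℝ) :
    ∫ θ in (0 : ℝ)..2 * π, (π - θ) * (sinSum ν y θ * cosSum ν x θ - cosSum ν y θ * sinSum ν x θ)
      = 2 * π * hilbertForm ν x y := by
  simp only [sinSum_mul_cosSum_sub_cosSum_mul_sinSum, Finset.mul_sum, mul_left_comm (π - _)]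
  rw [integral_sum_sum_mul (fun m n => Continuous.intervalIntegrable (by fun_prop) _ _)]
  simp only [integral_pi_sub_mul_sin_int_mul, hilbertForm, Finset.mul_sum]
  push_cast
  exact Finset.sum_congr rfl fun m _ => Finset.sum_congr rfl fun n _ => by ring

variable {ν}

theorem integral_cosSum_sq_add_sinSum_sq (hν : Function.Injective ν) (c : ι → ℝ) :
    ∫ θ in (0 : ℝ)..2 * π, (cosSum ν c θ ^ 2 + sinSum ν c θ ^ 2) = 2 * π * ∑ i, c i ^ 2 := by
  simp only [cosSum_sq_add_sinSum_sq]
  rw [integral_sum_sum_mul (fun m n => Continuous.intervalIntegrable (by fun_prop) _ _)]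
  simp only [integral_cos_int_mul]
  rw [Finset.mul_sum]
  refine Finset.sum_congr rfl fun m _ => ?_
  rw [Finset.sum_eq_single m (fun n _ hn => by simp [sub_eq_zero, hν.ne hn.symm]) (by simp)]
  simp only [sub_self, if_true]
  ring

theorem exists_mem_Ioo_cosSum_sq_add_sinSum_sq_pos (hν : Function.Injective ν) {c : ι → ℝ}
    (hc : c ≠ 0) : ∃ θ ∈ Set.Ioo 0 (2 * π), 0 < cosSum ν c θ ^ 2 + sinSum ν c θ ^ 2 := by
  by_contra! h
  have hzero : ∫ θ in (0 : ℝ)..2 * π, (cosSum ν c θ ^ 2 + sinSum ν c θ ^ 2) = 0 := by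
    rw [integral_of_le two_pi_pos.le, MeasureTheory.integral_Ioc_eq_integral_Ioo,
      MeasureTheory.setIntegral_congr_fun measurableSet_Ioo
        fun θ hθ => le_antisymm (h θ hθ) (by positivity)]
    simp
  obtain ⟨i, hi⟩ := Function.ne_iff.mp hc
  have hpos : 0 < ∑ i, c i ^ 2 :=
    Finset.sum_pos' (fun i _ => sq_nonneg _) ⟨i, Finset.mem_univ _, pow_two_pos_of_ne_zero hi⟩
  rw [integral_cosSum_sq_add_sinSum_sq hν] at hzero
  exact (mul_pos two_pi_pos hpos).ne' hzero

theorem two_mul_hilbertForm_lt (hν : Function.Injective ν) (x : ι → ℝ) {y : ι → ℝ}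
    (hy : y ≠ 0) : 2 * hilbertForm ν x y < π * (∑ i, x i ^ 2 + ∑ i, y i ^ 2) := by
  have hint : ∫ θ in (0 : ℝ)..2 * π, 2 * ((π - θ) *
        (sinSum ν y θ * cosSum ν x θ - cosSum ν y θ * sinSum ν x θ))
      < ∫ θ in (0 : ℝ)..2 * π, π * ((cosSum ν y θ ^ 2 + sinSum ν y θ ^ 2)
        + (cosSum ν x θ ^ 2 + sinSum ν x θ ^ 2)) := by
    obtain ⟨θ₀, ⟨h₀, h₂π⟩, hθ₀⟩ := exists_mem_Ioo_cosSum_sq_add_sinSum_sq_pos hν hy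
    refine integral_lt_integral_of_continuousOn_of_le_of_exists_lt two_pi_pos
      (by fun_prop) (by fun_prop) (fun θ ⟨h₀, h₂π⟩ => ?_) ⟨θ₀, ⟨h₀.le, h₂π.le⟩, ?_⟩
    · have := two_mul_mul_sub_mul_le (abs_le.mpr ⟨by linarith, by linarith⟩ : |π - θ| ≤ π)
        (cosSum ν y θ) (sinSum ν y θ) (cosSum ν x θ) (sinSum ν x θ)
      linarith
    · have := two_mul_mul_sub_mul_lt (abs_lt.mpr ⟨by linarith, by linarith⟩ : |π - θ₀| < π) hθ₀
        (cosSum ν x θ₀) (sinSum ν x θ₀)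
      linarith
  rw [integral_const_mul, integral_const_mul, integral_add
    (Continuous.intervalIntegrable (by fun_prop) _ _) (Continuous.intervalIntegrable (by fun_prop) _ _),
    integral_pi_sub_mul_sinSum_mul_cosSum_sub, integral_cosSum_sq_add_sinSum_sq hν,
    integral_cosSum_sq_add_sinSum_sq hν] at hint
  nlinarith [pi_pos]

end TrigonometricSums

theorem ContinuousLinearMap.exists_norm_le_one_norm_apply_eq_opNorm {𝕜 E F : Type*} [RCLike 𝕜]
    [NormedAddCommGroup E] [NormedSpace 𝕜 E] [FiniteDimensional 𝕜 E] [SeminormedAddCommGroup F]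
    [NormedSpace 𝕜 F] (f : E →L[𝕜] F) : ∃ x, ‖x‖ ≤ 1 ∧ ‖f x‖ = ‖f‖ := by
  have := FiniteDimensional.proper_rclike 𝕜 E
  have hK : IsCompact ((fun x => ‖f x‖) '' Metric.closedBall 0 1) :=
    (ProperSpace.isCompact_closedBall 0 1).image (by fun_prop)
  obtain ⟨x, hx, hfx⟩ := hK.sSup_mem ((Metric.nonempty_closedBall.mpr zero_le_one).image _)
  rw [f.sSup_unitClosedBall_eq_norm] at hfx
  exact ⟨x, mem_closedBall_zero_iff.mp hx, hfx⟩

theorem Tmat_apply (R : ℕ) (m n : Fin R) : Tmat R m n = 1 / ((m : ℝ) - n) := by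
  by_cases h : m = n <;> simp [Tmat, h]

theorem inner_toEuclideanCLM_Tmat (R : ℕ) (x y : EuclideanSpace ℝ (Fin R)) :
    inner ℝ y (Matrix.toEuclideanCLM (𝕜 := ℝ) (Tmat R) x)
      = hilbertForm (fun m : Fin R => ((m : ℕ) : ℤ)) x y := by
  rw [Matrix.inner_toEuclideanCLM]
  simp only [dotProduct, Matrix.mulVec, hilbertForm, Finset.mul_sum, Tmat_apply, Int.cast_natCast]
  exact Finset.sum_congr rfl fun m _ => Finset.sum_congr rfl fun n _ => by ring

theorem two_mul_inner_toEuclideanCLM_Tmat_lt (R : ℕ) (x : EuclideanSpace ℝ (Fin R))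
    {y : EuclideanSpace ℝ (Fin R)} (hy : y ≠ 0) :
    2 * inner ℝ y (Matrix.toEuclideanCLM (𝕜 := ℝ) (Tmat R) x) < π * (‖x‖ ^ 2 + ‖y‖ ^ 2) := by
  rw [inner_toEuclideanCLM_Tmat, EuclideanSpace.real_norm_sq_eq, EuclideanSpace.real_norm_sq_eq]
  exact two_mul_hilbertForm_lt (Nat.cast_injective.comp Fin.val_injective) x
    ((WithLp.ofLp_eq_zero 2).not.mpr hy)

theorem specNorm_Tmat_lt_pi_general (R : ℕ) :
    specNorm (Tmat R) < Real.pi := by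
  set L := Matrix.toEuclideanCLM (𝕜 := ℝ) (Tmat R)
  obtain ⟨x, hx, hLx⟩ := L.exists_norm_le_one_norm_apply_eq_opNorm
  rw [specNorm, ← hLx]
  rcases eq_or_ne (L x) 0 with h | h
  · simpa [h] using pi_pos
  set y := ‖L x‖⁻¹ • L x
  have hy : ‖y‖ = 1 := norm_smul_inv_norm h
  have hinner : inner ℝ y (L x) = ‖L x‖ := by
    rw [real_inner_smul_left, real_inner_self_eq_norm_sq]
    field_simp
  have key := two_mul_inner_toEuclideanCLM_Tmat_lt R x (norm_ne_zero_iff.mp (hy ▸ one_ne_zero))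
  rw [hinner, hy] at key
  nlinarith [pow_le_one₀ (n := 2) (norm_nonneg x) hx, pi_pos]

/-- Hilbert's inequality: `‖T_R‖ < π` for every `R ≥ 1`. -/
theorem specNorm_Tmat_lt_pi (R : ℕ) (hR : 1 ≤ R) :
    specNorm (Tmat R) < Real.pi :=
  specNorm_Tmat_lt_pi_general R
end

section
/- For every integer R ≥ 1, π − ‖T_R‖ equals the infimum, over all vectors u ∈ ℂ^R with Σ_{n=1}^R |u_n|² = 1, of ∫_0^{2π} x |φ_u(x)|² dx, where φ_u(x) = (1/√(2π)) Σ_{n=1}^R u_n exp(i(n−1)x). -/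
/-- The trigonometric polynomial `φ_u(x) = (2π)^{-1/2} Σ_{n=1}^R u_n e^{i(n-1)x}`
associated with `u ∈ ℂ^R` (here `n : Fin R` plays the role of `n - 1`). -/
noncomputable def phi {R : ℕ} (u : Fin R → ℂ) (t : ℝ) : ℂ :=
  ((Real.sqrt (2 * Real.pi) : ℝ) : ℂ)⁻¹ *
    ∑ n : Fin R, u n * Complex.exp (Complex.I * ((n : ℕ) : ℂ) * (t : ℂ))

/-!
Expanding `|φ_u|²` and integrating termwise with `∫₀^{2π} t e^{ikt} dt = 2π / (ik)` for `k ≠ 0`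
(and `2π²` for `k = 0`) gives `∫₀^{2π} t |φ_u(t)|² dt = π ‖u‖² + Im Σ u_m (T_R)_{mn} conj u_n`.
Writing `u = x + i y`, the imaginary part is `⟪y, T_R x⟫ - ⟪x, T_R y⟫`, bounded in absolute value by
`‖T_R‖ (‖x‖² + ‖y‖²)`. As `T_R` is antisymmetric it equals `2 ⟪y, T_R x⟫`, so the bound `-‖T_R‖`
is attained at `x = a / √2`, `y = -T_R a / (√2 ‖T_R‖)` for a unit vector `a` with
`‖T_R a‖ = ‖T_R‖`. The infimum is therefore a minimum, equal to `π - ‖T_R‖`.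
-/

open Complex Real
open scoped ComplexConjugate RealInnerProductSpace Matrix

namespace ContinuousLinearMap

theorem exists_norm_eq_one_norm_apply_eq_opNorm {V W : Type*} [NormedAddCommGroup V]
    [NormedSpace ℝ V] [FiniteDimensional ℝ V] [Nontrivial V] [NormedAddCommGroup W]
    [NormedSpace ℝ W] (L : V →L[ℝ] W) : ∃ x, ‖x‖ = 1 ∧ ‖L x‖ = ‖L‖ := by
  obtain ⟨x, hx, hmax⟩ := ((isCompact_sphere (0 : V) 1).image (by fun_prop)).sSup_mem
    ((NormedSpace.sphere_nonempty.mpr zero_le_one).image fun x => ‖L x‖)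
  exact ⟨x, mem_sphere_zero_iff_norm.mp hx, hmax.trans L.sSup_sphere_eq_norm⟩

variable {E : Type*} [NormedAddCommGroup E] [InnerProductSpace ℝ E]

theorem abs_inner_sub_inner_le (L : E →L[ℝ] E) (x y : E) :
    |⟪y, L x⟫ - ⟪x, L y⟫| ≤ ‖L‖ * (‖x‖ ^ 2 + ‖y‖ ^ 2) := by
  have hbound (a b : E) : |⟪a, L b⟫| ≤ ‖L‖ * (‖a‖ * ‖b‖) :=
    (abs_real_inner_le_norm _ _).trans <| by
      nlinarith [L.le_opNorm b, norm_nonneg a]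
  calc |⟪y, L x⟫ - ⟪x, L y⟫| ≤ |⟪y, L x⟫| + |⟪x, L y⟫| := abs_sub _ _
    _ ≤ ‖L‖ * (2 * (‖x‖ * ‖y‖)) := by linarith [hbound y x, hbound x y, mul_comm ‖x‖ ‖y‖]
    _ ≤ ‖L‖ * (‖x‖ ^ 2 + ‖y‖ ^ 2) := by
      gcongr; nlinarith [sq_nonneg (‖x‖ - ‖y‖)]

theorem exists_inner_sub_inner_eq_neg_opNorm [FiniteDimensional ℝ E] [Nontrivial E]
    (L : E →L[ℝ] E) (hL : ∀ x y, ⟪x, L y⟫ = -⟪y, L x⟫) :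
    ∃ x y : E, ‖x‖ ^ 2 + ‖y‖ ^ 2 = 1 ∧ ⟪y, L x⟫ - ⟪x, L y⟫ = -‖L‖ := by
  obtain ⟨a, ha, hLa⟩ := L.exists_norm_eq_one_norm_apply_eq_opNorm
  rcases eq_or_ne ‖L‖ 0 with hL0 | hL0
  · exact ⟨a, 0, by simp [ha], by simp [hL0]⟩
  -- by skewness the form is `2 ⟪y, L x⟫`, which is `-‖L a‖² / ‖L‖` at the witness below
  set s := (√2)⁻¹
  have hs : s ^ 2 = 2⁻¹ := by rw [inv_pow, Real.sq_sqrt zero_le_two]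
  refine ⟨s • a, -(s / ‖L‖) • L a, ?_, ?_⟩
  · rw [norm_smul, norm_smul, norm_neg, Real.norm_eq_abs, Real.norm_eq_abs, ha, hLa]
    rw [mul_pow, mul_pow, sq_abs, sq_abs, div_pow, hs, one_pow]
    field_simp
    norm_num
  · rw [hL (s • a), map_smul, inner_smul_left, inner_smul_right, real_inner_self_eq_norm_sq, hLa]
    simp only [conj_trivial]
    field_simp
    rw [hs]; ring

end ContinuousLinearMap

section RealImagParts

variable {ι : Type*} [Fintype ι]

theorem Matrix.inner_toEuclideanCLM_eq_neg_of_transpose_eq_neg [DecidableEq ι] {A : Matrix ι ι ℝ}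
    (hA : Aᵀ = -A) (x y : EuclideanSpace ℝ ι) :
    ⟪x, toEuclideanCLM (𝕜 := ℝ) A y⟫ = -⟪y, toEuclideanCLM (𝕜 := ℝ) A x⟫ := by
  rw [inner_toEuclideanCLM, inner_toEuclideanCLM, Matrix.dotProduct_mulVec,
    ← Matrix.mulVec_transpose, hA, Matrix.neg_mulVec, dotProduct_comm, dotProduct_neg]

theorem Matrix.im_sum_mul_mul_conj_eq_inner [DecidableEq ι] (A : Matrix ι ι ℝ)
    (x y : EuclideanSpace ℝ ι) :
    (∑ m, ∑ n, (⟨x m, y m⟩ : ℂ) * A m n * conj ⟨x n, y n⟩).im =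
      ⟪y, toEuclideanCLM (𝕜 := ℝ) A x⟫ - ⟪x, toEuclideanCLM (𝕜 := ℝ) A y⟫ := by
  simp only [inner_toEuclideanCLM, im_sum, dotProduct, Matrix.mulVec, Finset.mul_sum,
    ← Finset.sum_sub_distrib]
  refine Finset.sum_congr rfl fun m _ => Finset.sum_congr rfl fun n _ => ?_
  simp only [mul_im, mul_re, ofReal_re, ofReal_im, conj_re, conj_im]
  ring

theorem EuclideanSpace.sum_sq_norm_mk (x y : EuclideanSpace ℝ ι) :
    ∑ i, ‖(⟨x i, y i⟩ : ℂ)‖ ^ 2 = ‖x‖ ^ 2 + ‖y‖ ^ 2 := by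
  rw [EuclideanSpace.real_norm_sq_eq, EuclideanSpace.real_norm_sq_eq, ← Finset.sum_add_distrib]
  refine Finset.sum_congr rfl fun i _ => ?_
  rw [Complex.sq_norm, normSq_mk, sq, sq]

end RealImagParts

theorem Tmat_transpose (R : ℕ) : (Tmat R)ᵀ = -Tmat R := by
  ext m n
  simp only [Tmat, Matrix.transpose_apply, Matrix.neg_apply, Matrix.of_apply, eq_comm (a := n)]
  split_ifs
  · simp
  · rw [← neg_sub, div_neg]

theorem integral_mul_cexp_int_mul_I (k : ℤ) :
    ∫ t in (0 : ℝ)..2 * π, (t : ℂ) * cexp (I * k * t) =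
      if k = 0 then 2 * (π : ℂ) ^ 2 else 2 * π / (I * k) := by
  split_ifs with hk
  · simp only [hk, Int.cast_zero, mul_zero, zero_mul, Complex.exp_zero, mul_one]
    rw [intervalIntegral.integral_ofReal, integral_id]
    push_cast; ring
  set c : ℂ := I * k
  have hc : c ≠ 0 := mul_ne_zero I_ne_zero (Int.cast_ne_zero.mpr hk)
  have hderiv (t : ℝ) : HasDerivAt (fun s : ℝ => ((s : ℂ) / c - (c ^ 2)⁻¹) * cexp (c * s))
      ((t : ℂ) * cexp (c * t)) t := by
    have hid : HasDerivAt (fun s : ℝ => (s : ℂ)) 1 t := ofRealCLM.hasDerivAt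
    refine (((hid.div_const c).sub_const (c ^ 2)⁻¹).fun_mul
      (by simpa using (hid.const_mul c).cexp)).congr_deriv ?_
    field_simp
    ring
  have hperiod : cexp (c * (2 * π : ℝ)) = 1 := by
    rw [show c * (2 * π : ℝ) = k * (2 * π * I) by push_cast; ring, exp_int_mul_two_pi_mul_I]
  rw [intervalIntegral.integral_eq_sub_of_hasDerivAt (fun t _ => hderiv t)
    (by apply Continuous.intervalIntegrable; fun_prop), hperiod]
  simp

theorem integral_mul_cexp_sub_eq_Tmat {R : ℕ} (m n : Fin R) :
    ∫ t in (0 : ℝ)..2 * π, (t : ℂ) * cexp (I * (((m : ℕ) : ℤ) - (n : ℕ) : ℤ) * t) =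
      2 * π * ((if m = n then (π : ℂ) else 0) - I * Tmat R m n) := by
  rw [integral_mul_cexp_int_mul_I, Tmat, Matrix.of_apply]
  simp only [sub_eq_zero, Nat.cast_inj, Fin.val_inj]
  split_ifs
  · simp; ring
  · push_cast
    rw [mul_comm I, ← div_div, div_I]
    ring

theorem sq_norm_phi {R : ℕ} (u : Fin R → ℂ) (t : ℝ) :
    (‖phi u t‖ : ℂ) ^ 2 = (2 * π : ℂ)⁻¹ * ∑ m, ∑ n,
      u m * conj (u n) * cexp (I * (((m : ℕ) : ℤ) - (n : ℕ) : ℤ) * t) := by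
  have hsqrt : ((√(2 * π) : ℝ) : ℂ) ^ 2 = 2 * π := by
    rw [← ofReal_pow, Real.sq_sqrt (by positivity)]; push_cast; ring
  rw [← mul_conj', phi, map_mul, map_sum, mul_mul_mul_comm, Finset.sum_mul_sum, map_inv₀,
    conj_ofReal, ← sq, inv_pow, hsqrt]
  congr 1
  refine Finset.sum_congr rfl fun m _ => Finset.sum_congr rfl fun n _ => ?_
  rw [map_mul, ← exp_conj, mul_mul_mul_comm, ← Complex.exp_add]
  congr 2
  simp only [map_mul, conj_I, conj_ofReal, map_natCast]
  push_cast
  ring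

theorem integral_mul_sq_norm_phi {R : ℕ} (u : Fin R → ℂ) :
    ∫ t in (0 : ℝ)..2 * π, t * ‖phi u t‖ ^ 2 =
      π * ∑ n, ‖u n‖ ^ 2 + (∑ m, ∑ n, u m * Tmat R m n * conj (u n)).im := by
  have hcont (m n : Fin R) : Continuous fun t : ℝ =>
      (2 * π : ℂ)⁻¹ * (u m * conj (u n)) *
        ((t : ℂ) * cexp (I * (((m : ℕ) : ℤ) - (n : ℕ) : ℤ) * t)) := by fun_prop
  have hcomplex : ((∫ t in (0 : ℝ)..2 * π, t * ‖phi u t‖ ^ 2 : ℝ) : ℂ) =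
      ((π * ∑ n, ‖u n‖ ^ 2 : ℝ) : ℂ) - I * ∑ m, ∑ n, u m * Tmat R m n * conj (u n) := by
    calc ((∫ t in (0 : ℝ)..2 * π, t * ‖phi u t‖ ^ 2 : ℝ) : ℂ)
        = ∫ t in (0 : ℝ)..2 * π, ∑ m, ∑ n, (2 * π : ℂ)⁻¹ * (u m * conj (u n)) *
            ((t : ℂ) * cexp (I * (((m : ℕ) : ℤ) - (n : ℕ) : ℤ) * t)) := by
          rw [← intervalIntegral.integral_ofReal]
          refine intervalIntegral.integral_congr fun t _ => ?_
          simp only [ofReal_mul, ofReal_pow, sq_norm_phi, Finset.mul_sum]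
          refine Finset.sum_congr rfl fun m _ => Finset.sum_congr rfl fun n _ => ?_
          ring
      _ = ∑ m, ∑ n, (2 * π : ℂ)⁻¹ * (u m * conj (u n)) *
            (2 * π * ((if m = n then (π : ℂ) else 0) - I * Tmat R m n)) := by
          rw [intervalIntegral.integral_finsetSum fun m _ =>
            (continuous_finsetSum _ fun n _ => hcont m n).intervalIntegrable _ _]
          refine Finset.sum_congr rfl fun m _ => ?_
          rw [intervalIntegral.integral_finsetSum fun n _ => (hcont m n).intervalIntegrable _ _]
          refine Finset.sum_congr rfl fun n _ => ?_
          rw [intervalIntegral.integral_const_mul, integral_mul_cexp_sub_eq_Tmat]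
      _ = _ := by
          simp only [mul_sub, Finset.sum_sub_distrib, mul_ite, mul_zero,
            Finset.sum_ite_eq, Finset.mem_univ, if_true, Finset.mul_sum]
          push_cast
          congr 1
          · refine Finset.sum_congr rfl fun m _ => ?_
            rw [mul_conj']
            field_simp
          · refine Finset.sum_congr rfl fun m _ => Finset.sum_congr rfl fun n _ => ?_
            field_simp
  have hre := congrArg re hcomplex
  rwa [sub_re, ofReal_re, mul_re, I_re, I_im, zero_mul, one_mul, zero_sub, sub_neg_eq_add] at hre

/-- `π - ‖T_R‖` equals the infimum over unit vectors `u ∈ ℂ^R` of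
`∫_0^{2π} x |φ_u(x)|² dx`. -/
theorem pi_sub_specNorm_eq_sInf (R : ℕ) (hR : 1 ≤ R) :
    Real.pi - specNorm (Tmat R) =
      sInf {y : ℝ | ∃ u : Fin R → ℂ,
        (∑ n, ‖u n‖ ^ 2) = 1 ∧
        y = ∫ t in (0 : ℝ)..(2 * Real.pi), t * ‖phi u t‖ ^ 2} := by
  have : Nonempty (Fin R) := ⟨⟨0, hR⟩⟩
  set L := Matrix.toEuclideanCLM (𝕜 := ℝ) (Tmat R)
  have hintegral (x y : EuclideanSpace ℝ (Fin R)) :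
      ∫ t in (0 : ℝ)..(2 * π), t * ‖phi (fun n => ⟨x n, y n⟩) t‖ ^ 2 =
        π * (‖x‖ ^ 2 + ‖y‖ ^ 2) + (⟪y, L x⟫ - ⟪x, L y⟫) := by
    rw [integral_mul_sq_norm_phi, EuclideanSpace.sum_sq_norm_mk,
      Matrix.im_sum_mul_mul_conj_eq_inner]
  refine (IsLeast.csInf_eq ⟨?_, ?_⟩).symm
  · obtain ⟨x, y, hxy, hmin⟩ := L.exists_inner_sub_inner_eq_neg_opNorm
      (Matrix.inner_toEuclideanCLM_eq_neg_of_transpose_eq_neg (Tmat_transpose R))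
    refine ⟨fun n => ⟨x n, y n⟩, by rw [EuclideanSpace.sum_sq_norm_mk, hxy], ?_⟩
    rw [hintegral, hxy, hmin, mul_one, specNorm, sub_eq_add_neg]
  · rintro _ ⟨u, hu, rfl⟩
    obtain ⟨x, y, rfl⟩ : ∃ x y : EuclideanSpace ℝ (Fin R), u = fun n => ⟨x n, y n⟩ :=
      ⟨WithLp.toLp 2 fun n => (u n).re, WithLp.toLp 2 fun n => (u n).im, rfl⟩
    rw [EuclideanSpace.sum_sq_norm_mk] at hu
    have hbound := (abs_le.mp (L.abs_inner_sub_inner_le x y)).1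
    rw [hu, mul_one] at hbound
    rw [hintegral, hu, mul_one, specNorm]
    linarith
end

section
/- Let M and N be positive integers, define g(x) = (Σ_{m=0}^{M−1} exp(imx))^N, and let 0 < c ≤ 2π. Then ∫_{c/2}^{2π−c/2} |g(x)|² dx ≤ (2π/(2N−1)) · (2π/c)^{2N−1}. -/
/-!
Summing the geometric series gives `‖∑_{m<M} e^{imx}‖ ≤ 1 / |sin (x/2)|`, and Jordan's inequality
`sin (x/2) ≥ min x (2π - x) / π` turns this into
`‖g x‖² ≤ π^{2N} (x^{-2N} + (2π - x)^{-2N})` on `(0, 2π)`. The two terms have the same integral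
over the interval `[c/2, 2π - c/2]`, symmetric under `x ↦ 2π - x`, and that integral is at most
`(c/2)^{1-2N} / (2N - 1)`.
-/

/-- The function `g(x) = (Σ_{m=0}^{M-1} e^{imx})^N`. -/
noncomputable def gfun (M N : ℕ) (t : ℝ) : ℂ :=
  (∑ m ∈ Finset.range M, Complex.exp (Complex.I * (m : ℂ) * (t : ℂ))) ^ N

open Real Finset

theorem norm_geom_sum_le_two_div {𝕜 : Type*} [NormedField 𝕜] {z : 𝕜} (hz : ‖z‖ ≤ 1)
    (hz1 : z ≠ 1) (M : ℕ) : ‖∑ m ∈ range M, z ^ m‖ ≤ 2 / ‖z - 1‖ := by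
  rw [geom_sum_eq hz1, norm_div]
  gcongr
  calc ‖z ^ M - 1‖ ≤ ‖z‖ ^ M + ‖(1 : 𝕜)‖ := by rw [← norm_pow]; exact norm_sub_le _ _
    _ ≤ 2 := by rw [norm_one]; linarith [pow_le_one₀ (norm_nonneg z) hz (n := M)]

theorem norm_sum_exp_I_mul_le (M : ℕ) {x : ℝ} (hx : sin (x / 2) ≠ 0) :
    ‖∑ m ∈ range M, Complex.exp (Complex.I * m * x)‖ ≤ |sin (x / 2)|⁻¹ := by
  have hdist : ‖Complex.exp (Complex.I * x) - 1‖ = 2 * |sin (x / 2)| := by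
    rw [Complex.norm_exp_I_mul_ofReal_sub_one, norm_mul, Real.norm_two, Real.norm_eq_abs]
  have hne : Complex.exp (Complex.I * x) ≠ 1 := by
    intro h
    rw [h, sub_self, norm_zero] at hdist
    exact hx (abs_eq_zero.mp (by linarith [abs_nonneg (sin (x / 2))]))
  have hsum : ∑ m ∈ range M, Complex.exp (Complex.I * m * x)
      = ∑ m ∈ range M, Complex.exp (Complex.I * x) ^ m := by
    refine sum_congr rfl fun m _ => ?_
    rw [← Complex.exp_nat_mul]
    ring_nf
  have hbound := norm_geom_sum_le_two_div (Complex.norm_exp_I_mul_ofReal x).le hne M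
  rwa [← hsum, hdist, div_mul_cancel_left₀ two_ne_zero] at hbound

theorem norm_gfun_le (M N : ℕ) {x : ℝ} (hx : sin (x / 2) ≠ 0) :
    ‖gfun M N x‖ ≤ |sin (x / 2)|⁻¹ ^ N := by
  rw [gfun, norm_pow]
  exact pow_le_pow_left₀ (norm_nonneg _) (norm_sum_exp_I_mul_le M hx) N

theorem div_pi_le_sin_half {x : ℝ} (h0 : 0 ≤ x) (hx : x ≤ π) : x / π ≤ sin (x / 2) := by
  calc x / π = 2 / π * (x / 2) := by ring
    _ ≤ sin (x / 2) := mul_le_sin (by linarith) (by linarith)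

theorem inv_sin_half_pow_le (n : ℕ) {x : ℝ} (h0 : 0 < x) (hx : x < 2 * π) :
    (sin (x / 2))⁻¹ ^ n ≤ π ^ n * ((x ^ n)⁻¹ + ((2 * π - x) ^ n)⁻¹) := by
  have bound_of_sin_eq : ∀ y, 0 < y → y ≤ π → sin (y / 2) = sin (x / 2) →
      (sin (x / 2))⁻¹ ^ n ≤ π ^ n * (y ^ n)⁻¹ := by
    intro y hy0 hy hsin
    have hpos : 0 < y / π := div_pos hy0 pi_pos
    have hjordan : y / π ≤ sin (y / 2) := div_pi_le_sin_half hy0.le hy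
    rw [← hsin, ← inv_pow, ← mul_pow, ← div_eq_mul_inv]
    refine pow_le_pow_left₀ (inv_nonneg.mpr (hpos.trans_le hjordan).le) ?_ n
    calc (sin (y / 2))⁻¹ ≤ (y / π)⁻¹ := inv_anti₀ hpos hjordan
      _ = π / y := inv_div y π
  have hx' : 0 < 2 * π - x := by linarith
  rcases le_total x π with hle | hge
  · have hbound := bound_of_sin_eq x h0 hle rfl
    have hrest : 0 ≤ π ^ n * ((2 * π - x) ^ n)⁻¹ := by positivity
    rw [mul_add]; linarith
  · have hbound := bound_of_sin_eq (2 * π - x) hx' (by linarith) (by rw [← sin_pi_sub]; ring_nf)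
    have hrest : 0 ≤ π ^ n * (x ^ n)⁻¹ := by positivity
    rw [mul_add]; linarith

theorem sq_norm_gfun_le (M N : ℕ) {x : ℝ} (h0 : 0 < x) (hx : x < 2 * π) :
    ‖gfun M N x‖ ^ 2 ≤ π ^ (2 * N) * ((x ^ (2 * N))⁻¹ + ((2 * π - x) ^ (2 * N))⁻¹) := by
  have hsin : 0 < sin (x / 2) := sin_pos_of_pos_of_lt_pi (by linarith) (by linarith)
  calc ‖gfun M N x‖ ^ 2 ≤ (|sin (x / 2)|⁻¹ ^ N) ^ 2 := by
        gcongr; exact norm_gfun_le M N hsin.ne'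
    _ = (sin (x / 2))⁻¹ ^ (2 * N) := by rw [abs_of_pos hsin, ← pow_mul, mul_comm]
    _ ≤ _ := inv_sin_half_pow_le (2 * N) h0 hx

theorem continuous_gfun (M N : ℕ) : Continuous (gfun M N) := by
  unfold gfun; fun_prop

theorem integral_inv_pow_succ_le {a b : ℝ} {k : ℕ} (hk : 0 < k) (ha : 0 < a) (hab : a ≤ b) :
    ∫ x in a..b, (x ^ (k + 1))⁻¹ ≤ (a ^ k)⁻¹ / k := by
  have h0 : (0 : ℝ) ∉ Set.uIcc a b := by
    rw [Set.uIcc_of_le hab]; exact fun h => (h.1.trans_lt' ha).false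
  have hexp : -((k + 1 : ℕ) : ℤ) + 1 = -(k : ℤ) := by push_cast; ring
  have hint := integral_zpow (a := a) (b := b) (n := -(k + 1 : ℕ)) (Or.inr ⟨by omega, h0⟩)
  have hden : -((k + 1 : ℕ) : ℝ) + 1 = -(k : ℝ) := by push_cast; ring
  simp only [hexp, zpow_neg, zpow_natCast, Int.cast_neg, Int.cast_natCast, hden] at hint
  rw [hint, ← neg_div_neg_eq, neg_neg, neg_sub]
  gcongr
  exact sub_le_self _ (inv_nonneg.mpr (pow_nonneg (ha.le.trans hab) k))

theorem integral_tail_sq_norm_g_bound_general (M N : ℕ) (hN : 0 < N)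
    (c : ℝ) (hc : 0 < c) (hc2 : c ≤ 2 * Real.pi) :
    (∫ t in (c / 2)..(2 * Real.pi - c / 2), ‖gfun M N t‖ ^ 2) ≤
      (2 * Real.pi / (2 * (N : ℝ) - 1)) * (2 * Real.pi / c) ^ (2 * N - 1) := by
  set k := 2 * N - 1
  have hk : 2 * N = k + 1 := by omega
  have hkR : (k : ℝ) = 2 * N - 1 := by rw [Nat.cast_sub (by omega)]; push_cast; ring
  have ha : 0 < c / 2 := by positivity
  have hab : c / 2 ≤ 2 * π - c / 2 := by linarith
  have hF : IntervalIntegrable (fun x : ℝ => (x ^ (2 * N))⁻¹) MeasureTheory.volume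
      (c / 2) (2 * π - c / 2) := by
    refine ((continuousOn_id.pow _).inv₀ fun x hx => ?_).intervalIntegrable
    rw [Set.uIcc_of_le hab] at hx
    exact pow_ne_zero _ (ha.trans_le hx.1).ne'
  have hF_refl : IntervalIntegrable (fun x : ℝ => ((2 * π - x) ^ (2 * N))⁻¹)
      MeasureTheory.volume (c / 2) (2 * π - c / 2) := by
    simpa [sub_sub_cancel] using (hF.comp_sub_left (2 * π)).symm
  calc ∫ t in (c / 2)..(2 * π - c / 2), ‖gfun M N t‖ ^ 2
      ≤ ∫ x in (c / 2)..(2 * π - c / 2),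
          π ^ (2 * N) * ((x ^ (2 * N))⁻¹ + ((2 * π - x) ^ (2 * N))⁻¹) := by
        refine intervalIntegral.integral_mono_on hab
          (((continuous_gfun M N).norm.pow 2).intervalIntegrable _ _)
          ((hF.add hF_refl).const_mul _) fun x hx => sq_norm_gfun_le M N ?_ ?_
        · linarith [hx.1]
        · linarith [hx.2]
    _ = 2 * π ^ (2 * N) * ∫ x in (c / 2)..(2 * π - c / 2), (x ^ (2 * N))⁻¹ := by
        rw [intervalIntegral.integral_const_mul, intervalIntegral.integral_add hF hF_refl,
          intervalIntegral.integral_comp_sub_left (fun x => (x ^ (2 * N))⁻¹), sub_sub_cancel]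
        ring
    _ ≤ 2 * π ^ (2 * N) * ((c / 2) ^ k)⁻¹ / k := by
        rw [mul_div_assoc, hk]
        gcongr
        exact integral_inv_pow_succ_le (by omega) ha hab
    _ = _ := by
        rw [hk, ← hkR, div_pow, div_pow, pow_succ]
        field_simp
        ring

/-- For `0 < c ≤ 2π`,
`∫_{c/2}^{2π - c/2} |g(x)|² dx ≤ (2π/(2N-1)) (2π/c)^{2N-1}`. -/
theorem integral_tail_sq_norm_g_bound (M N : ℕ) (hM : 0 < M) (hN : 0 < N)
    (c : ℝ) (hc : 0 < c) (hc2 : c ≤ 2 * Real.pi) :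
    (∫ t in (c / 2)..(2 * Real.pi - c / 2), ‖gfun M N t‖ ^ 2) ≤
      (2 * Real.pi / (2 * (N : ℝ) - 1)) * (2 * Real.pi / c) ^ (2 * N - 1) :=
  integral_tail_sq_norm_g_bound_general M N hN c hc hc2
end
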